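/- arXiv:1803.10460 — 5 statements merged into one kernel-verified Lean document; each statement's English description precedes it below -/
import Mathlib

section
/- Let R be a commutative ring and I ⊆ R an ideal such that every element of 1+I is a unit of R. Then for every n ≥ 1 the relative Milnor K-group K^M_n(R,I) is generated as a group by the symbols {r_1,…,r_i, 1+x, r_{i+1},…,r_{n−1}}, where 0 ≤ i ≤ n−1, r_1,…,r_{n−1} are units of R, and x ∈ I. -/
open scoped TensorProduct

noncomputable section

/-! ### Milnor K-theory -/

/-- The `n`-th tensor power over `ℤ` of the group of units of `R`, written additively. -/
abbrev UnitsPow (R : Type*) [CommRing R] (n : ℕ) : Type _ :=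
  ⨂[ℤ]^n (Additive Rˣ)

/-- The subgroup of Steinberg relations: it is generated by the pure tensors
`r₁ ⊗ ⋯ ⊗ rᵢ ⊗ r ⊗ (1 - r) ⊗ rᵢ₊₁ ⊗ ⋯ ⊗ rₙ₋₂`, i.e. pure tensors of units having two
consecutive entries summing to `1` in `R`. -/
def SteinbergSubgroup (R : Type*) [CommRing R] (n : ℕ) :
    AddSubgroup (UnitsPow R n) :=
  AddSubgroup.closure
    {z | ∃ (r : Fin n → Rˣ) (i j : Fin n), (j : ℕ) = (i : ℕ) + 1 ∧
      ((r i : R) + (r j : R) = 1) ∧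
      z = PiTensorProduct.tprod ℤ fun k => Additive.ofMul (r k)}

/-- The `n`-th Milnor K-group of a commutative ring `R`: the quotient of the `n`-th tensor
power of `Rˣ` by the subgroup of Steinberg relations. -/
abbrev MilnorK (R : Type*) [CommRing R] (n : ℕ) : Type _ :=
  UnitsPow R n ⧸ SteinbergSubgroup R n

/-- The symbol `{r₁, …, rₙ}` in the `n`-th Milnor K-group. -/
def MilnorK.symbol {R : Type*} [CommRing R] {n : ℕ} (r : Fin n → Rˣ) : MilnorK R n :=
  QuotientAddGroup.mk (PiTensorProduct.tprod ℤ fun k => Additive.ofMul (r k))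

/-- The map on units (written additively) induced by a ring homomorphism. -/
def unitsMapHom {R S : Type*} [CommRing R] [CommRing S] (g : R →+* S) :
    Additive Rˣ →ₗ[ℤ] Additive Sˣ :=
  (MonoidHom.toAdditive (Units.map (g : R →* S))).toIntLinearMap

/-- The map on tensor powers of units induced by a ring homomorphism. -/
def unitsPowMap {R S : Type*} [CommRing R] [CommRing S] (g : R →+* S) (n : ℕ) :
    UnitsPow R n →ₗ[ℤ] UnitsPow S n :=
  PiTensorProduct.map fun _ : Fin n => unitsMapHom g

theorem unitsPowMap_tprod {R S : Type*} [CommRing R] [CommRing S] (g : R →+* S) {n : ℕ}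
    (r : Fin n → Rˣ) :
    unitsPowMap g n (PiTensorProduct.tprod ℤ fun k => Additive.ofMul (r k)) =
      PiTensorProduct.tprod ℤ fun k => Additive.ofMul (Units.map (g : R →* S) (r k)) := by
  simp only [unitsPowMap, PiTensorProduct.map_tprod]
  rfl

theorem steinberg_le_comap {R S : Type*} [CommRing R] [CommRing S] (g : R →+* S) (n : ℕ) :
    SteinbergSubgroup R n ≤
      (SteinbergSubgroup S n).comap (unitsPowMap g n).toAddMonoidHom := by
  rw [SteinbergSubgroup, AddSubgroup.closure_le]
  rintro z ⟨r, i, j, hij, hsum, rfl⟩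
  refine AddSubgroup.subset_closure ?_
  refine ⟨fun k => Units.map (g : R →* S) (r k), i, j, hij, ?_, ?_⟩
  · simp only [Units.coe_map, MonoidHom.coe_coe]
    rw [← map_add, hsum, map_one]
  · exact unitsPowMap_tprod g r

/-- The map on Milnor K-groups induced by a ring homomorphism. -/
def MilnorK.map {R S : Type*} [CommRing R] [CommRing S] (g : R →+* S) (n : ℕ) :
    MilnorK R n →+ MilnorK S n :=
  QuotientAddGroup.map _ _ (unitsPowMap g n).toAddMonoidHom (steinberg_le_comap g n)

/-- The relative Milnor K-group `K^M_n(R, I)`: the kernel of the natural map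
`K^M_n(R) → K^M_n(R/I)`. -/
def RelMilnorK {R : Type*} [CommRing R] (I : Ideal R) (n : ℕ) :
    AddSubgroup (MilnorK R n) :=
  (MilnorK.map (Ideal.Quotient.mk I) n).ker

/-- A commutative ring is weakly `5`-fold stable if any `4`-tuple of elements can be
simultaneously shifted by a unit so that all members become units. -/
def WeaklyFiveFoldStable (R : Type*) [CommRing R] : Prop :=
  ∀ r₁ r₂ r₃ r₄ : R, ∃ u : Rˣ,
    IsUnit (r₁ + (u : R)) ∧ IsUnit (r₂ + (u : R)) ∧ IsUnit (r₃ + (u : R)) ∧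
      IsUnit (r₄ + (u : R))

section Aux

variable {R : Type*} [CommRing R] (I : Ideal R)

theorem aux_isUnit_of_quot (hI : ∀ x ∈ I, IsUnit (1 + x)) {a : R}
    (h : IsUnit (Ideal.Quotient.mk I a)) : IsUnit a := by
  obtain ⟨u, hu⟩ := h
  obtain ⟨b, hb⟩ := Ideal.Quotient.mk_surjective ((u⁻¹ : (R ⧸ I)ˣ) : R ⧸ I)
  have h1 : Ideal.Quotient.mk I (a * b) = Ideal.Quotient.mk I 1 := by
    rw [map_mul, ← hu, hb, map_one]; exact u.mul_inv
  have h2 : a * b - 1 ∈ I := Ideal.Quotient.eq.mp h1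
  have h3 : IsUnit (a * b) := by
    have := hI _ h2
    rwa [add_sub_cancel] at this
  exact isUnit_of_mul_isUnit_left h3

theorem aux_surjUnits (hI : ∀ x ∈ I, IsUnit (1 + x)) (s : (R ⧸ I)ˣ) :
    ∃ u : Rˣ, Units.map ((Ideal.Quotient.mk I : R →+* R ⧸ I) : R →* R ⧸ I) u = s := by
  obtain ⟨a, ha⟩ := Ideal.Quotient.mk_surjective (s : R ⧸ I)
  have ha' : IsUnit a := aux_isUnit_of_quot I hI (ha ▸ s.isUnit)
  obtain ⟨u, rfl⟩ := ha'
  exact ⟨u, Units.ext (by simpa using ha)⟩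

/-- A choice of a unit lift along `R → R/I`. -/
def liftU (hI : ∀ x ∈ I, IsUnit (1 + x)) (s : (R ⧸ I)ˣ) : Rˣ :=
  (aux_surjUnits I hI s).choose

theorem liftU_spec (hI : ∀ x ∈ I, IsUnit (1 + x)) (s : (R ⧸ I)ˣ) :
    Units.map ((Ideal.Quotient.mk I : R →+* R ⧸ I) : R →* R ⧸ I) (liftU I hI s) = s :=
  (aux_surjUnits I hI s).choose_spec

theorem liftU_coe (hI : ∀ x ∈ I, IsUnit (1 + x)) (s : (R ⧸ I)ˣ) :
    Ideal.Quotient.mk I ((liftU I hI s : Rˣ) : R) = (s : R ⧸ I) := by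
  have := congrArg (Units.val) (liftU_spec I hI s)
  simpa using this

end Aux

section Main

variable {R : Type*} [CommRing R] (I : Ideal R) (m : ℕ)

/-- The set of generating pure tensors: those having some entry of the form `1 + x`, `x ∈ I`. -/
def TSet : Set (UnitsPow R (m + 1)) :=
  {z | ∃ (i : Fin (m + 1)) (r : Fin m → Rˣ) (x : R), x ∈ I ∧
    ∃ v : Rˣ, (v : R) = 1 + x ∧
      z = PiTensorProduct.tprod ℤ fun k => Additive.ofMul ((i.insertNth v r : Fin (m + 1) → Rˣ) k)}

/-- The candidate subgroup upstairs. -/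
def NN : AddSubgroup (UnitsPow R (m + 1)) :=
  AddSubgroup.closure (TSet I m) ⊔ SteinbergSubgroup R (m + 1)

/-- The quotient of the tensor power by `NN`. -/
def QA : Type _ := UnitsPow R (m + 1) ⧸ AddSubgroup.toIntSubmodule (NN I m)

instance : AddCommGroup (QA I m) := by unfold QA; infer_instance
instance : Module ℤ (QA I m) := by unfold QA; infer_instance

/-- The class of a pure tensor of units in `QA`. -/
def Msym (g : Fin (m + 1) → Rˣ) : QA I m :=
  Submodule.Quotient.mk (PiTensorProduct.tprod ℤ fun k => Additive.ofMul (g k))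

theorem Msym_eq_zero {g : Fin (m + 1) → Rˣ}
    (h : (PiTensorProduct.tprod ℤ fun k => Additive.ofMul (g k)) ∈ NN I m) :
    Msym I m g = 0 :=
  (Submodule.Quotient.mk_eq_zero _).mpr (by rwa [← SetLike.mem_coe, AddSubgroup.coe_toIntSubmodule])

theorem Msym_eq_zero_of_entry {g : Fin (m + 1) → Rˣ} (i : Fin (m + 1))
    (h : ((g i : R)) - 1 ∈ I) : Msym I m g = 0 := by
  refine Msym_eq_zero I m ?_
  refine AddSubgroup.mem_sup_left (AddSubgroup.subset_closure ?_)
  refine ⟨i, i.removeNth g, (g i : R) - 1, h, g i, by ring, ?_⟩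
  rw [Fin.insertNth_self_removeNth]

theorem Msym_update_mul [DecidableEq (Fin (m + 1))] (g : Fin (m + 1) → Rˣ) (i : Fin (m + 1)) (u v : Rˣ) :
    Msym I m (Function.update g i (u * v)) =
      Msym I m (Function.update g i u) + Msym I m (Function.update g i v) := by
  unfold Msym
  refine Eq.trans ?_ (Submodule.Quotient.mk_add _)
  congr 1
  have key : ∀ w : Rˣ, (fun k => Additive.ofMul (Function.update g i w k)) =
      Function.update (fun k => Additive.ofMul (g k)) i (Additive.ofMul w) := by
    intro w; funext k
    by_cases hk : k = i
    · subst hk; simp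
    · simp [Function.update_of_ne hk]
  rw [key, key, key, ofMul_mul,
    (PiTensorProduct.tprod ℤ).map_update_add]

theorem Msym_update_zpow [DecidableEq (Fin (m + 1))] (g : Fin (m + 1) → Rˣ) (i : Fin (m + 1)) (u : Rˣ) (c : ℤ) :
    Msym I m (Function.update g i (u ^ c)) = c • Msym I m (Function.update g i u) := by
  unfold Msym
  refine Eq.trans ?_ (Submodule.Quotient.mk_smul _ _ _)
  congr 1
  have key : ∀ w : Rˣ, (fun k => Additive.ofMul (Function.update g i w k)) =
      Function.update (fun k => Additive.ofMul (g k)) i (Additive.ofMul w) := by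
    intro w; funext k
    by_cases hk : k = i
    · subst hk; simp
    · simp [Function.update_of_ne hk]
  rw [key, key, ofMul_zpow, (PiTensorProduct.tprod ℤ).map_update_smul]

theorem Msym_congr {g g' : Fin (m + 1) → Rˣ}
    (h : ∀ k, Ideal.Quotient.mk I ((g k : Rˣ) : R) = Ideal.Quotient.mk I ((g' k : Rˣ) : R)) :
    Msym I m g = Msym I m g' := by
  classical
  suffices H : ∀ s : Finset (Fin (m + 1)), ∀ g g' : Fin (m + 1) → Rˣ,
      (∀ k, Ideal.Quotient.mk I ((g k : Rˣ) : R) = Ideal.Quotient.mk I ((g' k : Rˣ) : R)) →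
      (∀ k ∉ s, g k = g' k) → Msym I m g = Msym I m g' by
    exact H Finset.univ g g' h (by simp)
  intro s
  induction s using Finset.induction_on with
  | empty =>
    intro g g' _ h2
    have : g = g' := funext fun k => h2 k (by simp)
    rw [this]
  | insert a s ha ih =>
    intro g g' h1 h2
    set v : Rˣ := (g a)⁻¹ * g' a with hv
    have hva : g a * v = g' a := by rw [hv, mul_inv_cancel_left]
    have hv1 : ((v : Rˣ) : R) - 1 ∈ I := by
      have hmul : Ideal.Quotient.mk I ((g a : R)) * Ideal.Quotient.mk I ((v : Rˣ) : R) =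
          Ideal.Quotient.mk I ((g a : R)) * 1 := by
        rw [← map_mul, mul_one]
        have hval : ((g a : Rˣ) : R) * ((v : Rˣ) : R) = ((g' a : Rˣ) : R) := by
          rw [← Units.val_mul, hva]
        rw [hval, h1 a]
      have hu : IsUnit (Ideal.Quotient.mk I ((g a : R))) :=
        ⟨Units.map ((Ideal.Quotient.mk I : R →+* R ⧸ I) : R →* R ⧸ I) (g a), rfl⟩
      have hvq : Ideal.Quotient.mk I ((v : Rˣ) : R) = 1 := hu.mul_left_cancel hmul
      exact Ideal.Quotient.eq.mp (by rw [hvq, map_one])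
    have step1 : Msym I m g = Msym I m (Function.update g a (g' a)) := by
      rw [← hva, Msym_update_mul, Function.update_eq_self]
      have : Msym I m (Function.update g a v) = 0 :=
        Msym_eq_zero_of_entry I m a (by simpa using hv1)
      rw [this, add_zero]
    rw [step1]
    apply ih
    · intro k
      by_cases hk : k = a
      · subst hk; simp
      · rw [Function.update_of_ne hk]; exact h1 k
    · intro k hk
      by_cases hka : k = a
      · subst hka; simp
      · rw [Function.update_of_ne hka]
        exact h2 k (by simp [hka, hk])

theorem liftU_update [DecidableEq (Fin (m + 1))] (hI : ∀ x ∈ I, IsUnit (1 + x))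
    (w : Fin (m + 1) → Additive (R ⧸ I)ˣ) (i : Fin (m + 1)) (c : Additive (R ⧸ I)ˣ) :
    (fun k => liftU I hI (Additive.toMul (Function.update w i c k))) =
      Function.update (fun k => liftU I hI (Additive.toMul (w k))) i
        (liftU I hI (Additive.toMul c)) := by
  funext k
  by_cases hk : k = i
  · subst hk; simp
  · simp [Function.update_of_ne hk]

/-- The multilinear map underlying the inverse construction. -/
def Phi (hI : ∀ x ∈ I, IsUnit (1 + x)) :
    MultilinearMap ℤ (fun _ : Fin (m + 1) => Additive (R ⧸ I)ˣ) (QA I m) where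
  toFun w := Msym I m fun k => liftU I hI (Additive.toMul (w k))
  map_update_add' := by
    intro _ w i a b
    rw [liftU_update, liftU_update, liftU_update]
    set base := fun k => liftU I hI (Additive.toMul (w k))
    have h1 : Msym I m (Function.update base i (liftU I hI (Additive.toMul (a + b)))) =
        Msym I m (Function.update base i
          (liftU I hI (Additive.toMul a) * liftU I hI (Additive.toMul b))) := by
      apply Msym_congr
      intro k
      by_cases hk : k = i
      · subst hk
        simp only [Function.update_self]
        rw [liftU_coe, Units.val_mul, map_mul, liftU_coe, liftU_coe, toMul_add,
          Units.val_mul]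
      · rw [Function.update_of_ne hk, Function.update_of_ne hk]
    rw [h1, Msym_update_mul]
  map_update_smul' := by
    intro _ w i c x
    rw [liftU_update, liftU_update]
    set base := fun k => liftU I hI (Additive.toMul (w k))
    have h1 : Msym I m (Function.update base i (liftU I hI (Additive.toMul (c • x)))) =
        Msym I m (Function.update base i (liftU I hI (Additive.toMul x) ^ c)) := by
      apply Msym_congr
      intro k
      by_cases hk : k = i
      · subst hk
        simp only [Function.update_self]
        rw [liftU_coe, toMul_zsmul]
        have h2 : Units.map ((Ideal.Quotient.mk I : R →+* R ⧸ I) : R →* R ⧸ I)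
            (liftU I hI (Additive.toMul x) ^ c) = Additive.toMul x ^ c := by
          rw [map_zpow, liftU_spec]
        rw [← h2]
        rfl
      · rw [Function.update_of_ne hk, Function.update_of_ne hk]
    rw [h1, Msym_update_zpow]
    rfl


/-- The induced map on the tensor power over `R ⧸ I`. -/
def LMap (hI : ∀ x ∈ I, IsUnit (1 + x)) :
    UnitsPow (R ⧸ I) (m + 1) →ₗ[ℤ] QA I m :=
  PiTensorProduct.lift (Phi I m hI)

theorem LMap_comp (hI : ∀ x ∈ I, IsUnit (1 + x)) (z : UnitsPow R (m + 1)) :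
    LMap I m hI (unitsPowMap (Ideal.Quotient.mk I) (m + 1) z) =
      Submodule.Quotient.mk z := by
  induction z using PiTensorProduct.induction_on with
  | smul_tprod c f =>
    have hf : f = fun k => Additive.ofMul (Additive.toMul (f k)) := rfl
    have key : LMap I m hI (unitsPowMap (Ideal.Quotient.mk I) (m + 1)
        ((PiTensorProduct.tprod ℤ) f)) =
        Submodule.Quotient.mk ((PiTensorProduct.tprod ℤ) f) := by
      conv_lhs => rw [hf]
      rw [unitsPowMap_tprod, LMap, PiTensorProduct.lift.tprod]
      show Msym I m _ = _
      have h2 : Msym I m (fun k => liftU I hI (Additive.toMul (Additive.ofMul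
          (Units.map ((Ideal.Quotient.mk I : R →+* R ⧸ I) : R →* R ⧸ I)
            (Additive.toMul (f k)))))) = Msym I m (fun k => Additive.toMul (f k)) := by
        apply Msym_congr
        intro k
        rw [liftU_coe]
        rfl
      rw [h2]
      rfl
    rw [map_smul, map_smul, key, Submodule.Quotient.mk_smul]
    rfl
  | add x y hx hy =>
    rw [map_add, map_add, hx, hy]
    rfl

theorem LMap_steinberg (hI : ∀ x ∈ I, IsUnit (1 + x)) {z : UnitsPow (R ⧸ I) (m + 1)}
    (hz : z ∈ SteinbergSubgroup (R ⧸ I) (m + 1)) : LMap I m hI z = 0 := by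
  classical
  revert z
  suffices H : SteinbergSubgroup (R ⧸ I) (m + 1) ≤
      (LMap I m hI).toAddMonoidHom.ker by
    intro z hz; exact H hz
  rw [SteinbergSubgroup, AddSubgroup.closure_le]
  rintro z ⟨s, i, j, hij, hsum, rfl⟩
  simp only [SetLike.mem_coe, AddMonoidHom.mem_ker, LinearMap.toAddMonoidHom_coe]
  rw [LMap, PiTensorProduct.lift.tprod]
  show Msym I m _ = 0
  set g : Fin (m + 1) → Rˣ := fun k => liftU I hI (Additive.toMul (Additive.ofMul (s k)))
  have hgk : ∀ k, Ideal.Quotient.mk I ((g k : R)) = ((s k : (R ⧸ I)ˣ) : R ⧸ I) := by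
    intro k; exact liftU_coe I hI (s k)
  have hji : j ≠ i := by
    intro h; rw [h] at hij; omega
  set b : R := 1 - ((g i : Rˣ) : R) with hbdef
  have hb : Ideal.Quotient.mk I b = ((s j : (R ⧸ I)ˣ) : R ⧸ I) := by
    rw [hbdef, map_sub, map_one, hgk i]
    have : ((s j : (R ⧸ I)ˣ) : R ⧸ I) = 1 - ((s i : (R ⧸ I)ˣ) : R ⧸ I) := by
      rw [← hsum]; ring
    rw [this]
  have hbu : IsUnit b := aux_isUnit_of_quot I hI (hb ▸ (s j).isUnit)
  obtain ⟨bu, hbu'⟩ := hbu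
  have step : Msym I m g = Msym I m (Function.update g j bu) := by
    apply Msym_congr
    intro k
    by_cases hk : k = j
    · subst hk
      rw [Function.update_self, hgk k, hbu', hb]
    · rw [Function.update_of_ne hk]
  rw [step]
  apply Msym_eq_zero
  apply AddSubgroup.mem_sup_right
  apply AddSubgroup.subset_closure
  refine ⟨Function.update g j bu, i, j, hij, ?_, rfl⟩
  rw [Function.update_self, Function.update_of_ne (Ne.symm hji), hbu', hbdef]
  ring


end Main

/-- If every element of `1 + I` is a unit, then for every `n ≥ 1` the
relative Milnor K-group `K^M_n(R, I)` is generated by the symbols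
`{r₁, …, rᵢ, 1+x, rᵢ₊₁, …, r_{n-1}}` with the `rₖ` units of `R` and `x ∈ I`
(we write `n = m + 1`). -/
theorem relMilnorK_generated_by_symbols
    {R : Type*} [CommRing R] (I : Ideal R) (hI : ∀ x ∈ I, IsUnit (1 + x)) (m : ℕ) :
    RelMilnorK I (m + 1) = AddSubgroup.closure
      {z | ∃ (i : Fin (m + 1)) (r : Fin m → Rˣ) (x : R), x ∈ I ∧
        ∃ v : Rˣ, (v : R) = 1 + x ∧ z = MilnorK.symbol (i.insertNth v r)} := by
  classical
  apply AddSubgroup.comap_injective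
    (f := QuotientAddGroup.mk' (SteinbergSubgroup R (m + 1)))
    (QuotientAddGroup.mk'_surjective _)
  have hSym : {z | ∃ (i : Fin (m + 1)) (r : Fin m → Rˣ) (x : R), x ∈ I ∧
      ∃ v : Rˣ, (v : R) = 1 + x ∧ z = MilnorK.symbol (i.insertNth v r)} =
      (QuotientAddGroup.mk' (SteinbergSubgroup R (m + 1))) '' TSet I m := by
    ext z
    constructor
    · rintro ⟨i, r, x, hx, v, hv, rfl⟩
      exact ⟨_, ⟨i, r, x, hx, v, hv, rfl⟩, rfl⟩
    · rintro ⟨w, ⟨i, r, x, hx, v, hv, rfl⟩, rfl⟩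
      exact ⟨i, r, x, hx, v, hv, rfl⟩
  rw [hSym, ← AddMonoidHom.map_closure, AddSubgroup.comap_map_eq, QuotientAddGroup.ker_mk']
  ext z
  simp only [AddSubgroup.mem_comap, RelMilnorK, AddMonoidHom.mem_ker]
  rw [show (QuotientAddGroup.mk' (SteinbergSubgroup R (m + 1))) z =
    QuotientAddGroup.mk z from rfl]
  rw [show MilnorK.map (Ideal.Quotient.mk I) (m + 1) (QuotientAddGroup.mk z) =
    QuotientAddGroup.mk (unitsPowMap (Ideal.Quotient.mk I) (m + 1) z) from rfl]
  rw [QuotientAddGroup.eq_zero_iff]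
  constructor
  · intro h
    have h0 := LMap_steinberg I m hI h
    rw [LMap_comp] at h0
    have h1 := (Submodule.Quotient.mk_eq_zero _).mp h0
    rw [← SetLike.mem_coe, AddSubgroup.coe_toIntSubmodule] at h1
    exact h1
  · intro h
    have key : NN I m ≤ AddSubgroup.comap
        (unitsPowMap (Ideal.Quotient.mk I) (m + 1)).toAddMonoidHom
        (SteinbergSubgroup (R ⧸ I) (m + 1)) := by
      apply sup_le
      · rw [AddSubgroup.closure_le]
        rintro w ⟨i, r, x, hx, v, hv, rfl⟩
        simp only [SetLike.mem_coe, AddSubgroup.mem_comap, LinearMap.toAddMonoidHom_coe]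
        rw [unitsPowMap_tprod]
        have hz : (fun k => Additive.ofMul
            (Units.map ((Ideal.Quotient.mk I : R →+* R ⧸ I) : R →* R ⧸ I)
              ((i.insertNth v r : Fin (m + 1) → Rˣ) k))) i = 0 := by
          have h1 : (i.insertNth v r : Fin (m + 1) → Rˣ) i = v := by simp
          show Additive.ofMul (Units.map ((Ideal.Quotient.mk I : R →+* R ⧸ I) : R →* R ⧸ I)
            ((i.insertNth v r : Fin (m + 1) → Rˣ) i)) = 0
          rw [h1]
          have h2 : Units.map ((Ideal.Quotient.mk I : R →+* R ⧸ I) : R →* R ⧸ I) v = 1 := by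
            apply Units.ext
            show Ideal.Quotient.mk I ((v : Rˣ) : R) = 1
            rw [hv, map_add, map_one, Ideal.Quotient.eq_zero_iff_mem.mpr hx, add_zero]
          rw [h2]
          rfl
        rw [MultilinearMap.map_coord_zero _ i hz]
        exact zero_mem _
      · exact steinberg_le_comap (Ideal.Quotient.mk I) (m + 1)
    exact key h
end
end

section
/- Let R be a commutative ring and I ⊆ R an ideal. Then for every n ≥ 0 the relative module of differential forms Ω^n_{R,I} is generated additively, as an abelian group, by the differential forms x dr_1 ∧ … ∧ dr_n and the differential forms r_1 dx ∧ dr_2 ∧ … ∧ dr_n, where r_1,…,r_n ∈ R and x ∈ I. Equivalently, Ω^n_{R,I} = I·Ω^n_R + dI ∧ Ω^{n−1}_R as submodules of Ω^n_R. -/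
open scoped TensorProduct

noncomputable section

/-! ### Differential forms -/

/-- `Ω^n_R`: the `n`-th exterior power over `R` of the module of absolute Kähler
differentials `Ω^1_{R/ℤ}`. -/
abbrev OmegaPow (R : Type*) [CommRing R] (n : ℕ) : Type _ :=
  ⋀[R]^n (Ω[R⁄ℤ])

/-- The differential form `s · dr₁ ∧ ⋯ ∧ drₙ` in `Ω^n_R`. -/
def OmegaPow.gen {R : Type*} [CommRing R] {n : ℕ} (s : R) (r : Fin n → R) :
    OmegaPow R n :=
  s • (⟨ExteriorAlgebra.ιMulti R n fun i => KaehlerDifferential.D ℤ R (r i),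
    ExteriorAlgebra.ιMulti_range R n (Set.mem_range_self _)⟩ : OmegaPow R n)

/-- `π : Ω^n_R →+ Ω^n_{R'}` is the natural map on differential forms induced by the ring
homomorphism `g : R →+* R'` iff it sends `s · dr₁ ∧ ⋯ ∧ drₙ` to
`g(s) · d(g r₁) ∧ ⋯ ∧ d(g rₙ)`.  (Since such elements generate `Ω^n_R` additively, this
characterizes the natural map uniquely.) -/
def IsOmegaMap {R R' : Type*} [CommRing R] [CommRing R'] (g : R →+* R') {n : ℕ}
    (π : OmegaPow R n →+ OmegaPow R' n) : Prop :=
  ∀ (s : R) (r : Fin n → R), π (OmegaPow.gen s r) = OmegaPow.gen (g s) fun i => g (r i)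

/-- `dd : Ω^n_R →+ Ω^{n+1}_R` is the de Rham differential iff it sends
`s · dr₁ ∧ ⋯ ∧ drₙ` to `ds ∧ dr₁ ∧ ⋯ ∧ drₙ`. -/
def IsDeRhamD {R : Type*} [CommRing R] {n : ℕ}
    (dd : OmegaPow R n →+ OmegaPow R (n + 1)) : Prop :=
  ∀ (s : R) (r : Fin n → R), dd (OmegaPow.gen s r) = OmegaPow.gen 1 (Fin.cons s r)

/-- A bundle of de Rham differentials in all degrees for the ring `R`. -/
structure DeRhamData (R : Type*) [CommRing R] where
  d : ∀ n : ℕ, OmegaPow R n →+ OmegaPow R (n + 1)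
  isDeRhamD : ∀ n : ℕ, IsDeRhamD (d n)

/-- A bundle, in all degrees, of the natural maps on differential forms induced by a ring
homomorphism `g : R →+* R'`. -/
structure OmegaMapData {R R' : Type*} [CommRing R] [CommRing R'] (g : R →+* R') where
  π : ∀ n : ℕ, OmegaPow R n →+ OmegaPow R' n
  isOmegaMap : ∀ n : ℕ, IsOmegaMap g (π n)

/-- The relative module of differential forms `Ω^n_{R,I}`, i.e. the kernel of the natural
surjection `Ω^n_R → Ω^n_{R/I}` (here along an arbitrary ring homomorphism `g`). -/
def relOmega {R R' : Type*} [CommRing R] [CommRing R'] {g : R →+* R'}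
    (P : OmegaMapData g) (n : ℕ) : AddSubgroup (OmegaPow R n) :=
  (P.π n).ker

/-- The subgroup `d Ω^{n-1}_{R,I}` of exact relative differential forms in degree `n`
(by convention it is trivial in degree `0`). -/
def relExact {R R' : Type*} [CommRing R] [CommRing R'] {g : R →+* R'}
    (D : DeRhamData R) (P : OmegaMapData g) : ∀ n : ℕ, AddSubgroup (OmegaPow R n)
  | 0 => ⊥
  | (m + 1) => (relOmega P m).map (D.d m)

/-- The quotient group `Ω^n_{R,I} / d Ω^{n-1}_{R,I}`. -/
abbrev relOmegaQuot {R R' : Type*} [CommRing R] [CommRing R'] {g : R →+* R'}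
    (D : DeRhamData R) (P : OmegaMapData g) (n : ℕ) : Type _ :=
  relOmega P n ⧸ (relExact D P n).addSubgroupOf (relOmega P n)

/-- Vanishing of the relative de Rham cohomology `H^n_dR(R, I)`: every closed relative
`n`-form is the differential of a relative `(n-1)`-form. -/
def RelDeRhamVanish {R R' : Type*} [CommRing R] [CommRing R'] {g : R →+* R'}
    (D : DeRhamData R) (P : OmegaMapData g) (n : ℕ) : Prop :=
  ∀ ω ∈ relOmega P n, D.d n ω = 0 → ω ∈ relExact D P n

/-- The truncated logarithm `log(1+x) = Σ_{k=1}^{N-1} (-1)^{k+1} x^k / k`, written using a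
chosen inverse `e` of `(N-1)!`: `log(1+x) = e · Σ_{k=1}^{N-1} (-1)^{k+1} ((N-1)!/k) x^k`. -/
def nilLog {R : Type*} [CommRing R] (N : ℕ) (e : R) (x : R) : R :=
  e * ∑ k ∈ Finset.Icc 1 (N - 1), (-1 : R) ^ (k + 1) * ((N - 1).factorial / k : ℕ) * x ^ k

/-- `B : K^M_{n+1}(R,I) →+ Ω^n_{R,I}/dΩ^{n-1}_{R,I}` is a Bloch map if it sends the symbol
`{r₁, …, rᵢ, 1+x, rᵢ₊₁, …, rₙ}` (with `x ∈ I`) to the class of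
`(-1)^i · log(1+x) · (dr₁/r₁) ∧ ⋯ ∧ (drₙ/rₙ)`. -/
def IsBlochMap {R : Type*} [CommRing R] (I : Ideal R) (N : ℕ) (e : R)
    (D : DeRhamData R) (P : OmegaMapData (Ideal.Quotient.mk I)) (n : ℕ)
    (B : RelMilnorK I (n + 1) →+ relOmegaQuot D P n) : Prop :=
  ∀ (i : Fin (n + 1)) (r : Fin n → Rˣ) (x : R), x ∈ I → ∀ v : Rˣ, (v : R) = 1 + x →
    ∀ (hz : MilnorK.symbol (i.insertNth v r) ∈ RelMilnorK I (n + 1))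
      (hω : OmegaPow.gen
          ((-1 : R) ^ (i : ℕ) * nilLog N e x * ∏ k, (((r k)⁻¹ : Rˣ) : R))
          (fun k => (r k : R)) ∈ relOmega P n),
      B ⟨_, hz⟩ = QuotientAddGroup.mk ⟨_, hω⟩

/-- The map `dlog : K^M_n(R) → Ω^n_R`, characterized on symbols by
`{r₁,…,rₙ} ↦ (dr₁/r₁) ∧ ⋯ ∧ (drₙ/rₙ)`. -/
def IsDlog {R : Type*} [CommRing R] {n : ℕ} (ℓ : MilnorK R n →+ OmegaPow R n) : Prop :=
  ∀ r : Fin n → Rˣ,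
    ℓ (MilnorK.symbol r) =
      OmegaPow.gen (∏ k, (((r k)⁻¹ : Rˣ) : R)) fun k => (r k : R)
/-! ### Auxiliary development for `relOmega_generated` -/

namespace RelGenAux

open Submodule

/-- Coordinatewise span induction for multilinear maps. -/
theorem multilinear_mem_of_span {R : Type*} [CommRing R] {M N : Type*} [AddCommGroup M]
    [Module R M] [AddCommGroup N] [Module R N] {n : ℕ}
    (f : MultilinearMap R (fun _ : Fin n => M) N) (p : Submodule R N)
    (s : Fin n → Set M)
    (h : ∀ v : Fin n → M, (∀ i, v i ∈ s i) → f v ∈ p) :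
    ∀ v : Fin n → M, (∀ i, v i ∈ Submodule.span R (s i)) → f v ∈ p := by
  classical
  suffices H : ∀ k : ℕ, ∀ v : Fin n → M,
      (∀ i : Fin n, (i : ℕ) < k → v i ∈ Submodule.span R (s i)) →
      (∀ i : Fin n, k ≤ (i : ℕ) → v i ∈ s i) → f v ∈ p by
    intro v hv
    exact H n v (fun i _ => hv i) (fun i hi => absurd i.isLt (by omega))
  intro k
  induction k with
  | zero => intro v _ h2; exact h v fun i => h2 i (Nat.zero_le _)
  | succ k IH =>
    intro v h1 h2
    by_cases hk : k < n
    · set i : Fin n := ⟨k, hk⟩ with hi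
      have hvi : v i ∈ Submodule.span R (s i) := h1 i (by simp [hi])
      have key : ∀ x ∈ Submodule.span R (s i), f (Function.update v i x) ∈ p := by
        intro x hx
        induction hx using Submodule.span_induction with
        | mem x hx =>
          refine IH _ (fun j hj => ?_) (fun j hj => ?_)
          · have hji : j ≠ i := by simp [hi, Fin.ext_iff]; omega
            rw [Function.update_of_ne hji]
            exact h1 j (by omega)
          · by_cases hji : j = i
            · subst hji; simpa using hx
            · rw [Function.update_of_ne hji]
              refine h2 j ?_
              have : (j : ℕ) ≠ k := by simpa [hi, Fin.ext_iff] using hji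
              omega
        | zero => rw [f.map_coord_zero i (by simp)]; exact p.zero_mem
        | add x y _ _ hx hy => rw [f.map_update_add]; exact p.add_mem hx hy
        | smul a x _ hx => rw [f.map_update_smul]; exact p.smul_mem a hx
      have := key (v i) hvi
      rwa [Function.update_eq_self] at this
    · refine IH v (fun j _ => h1 j (by omega)) (fun j hj => absurd j.isLt (by omega))

end RelGenAux
namespace RelGenAux

/-- The canonical alternating map into the `n`-th exterior power. -/
noncomputable def ιM (R : Type*) [CommRing R] (M : Type*) [AddCommGroup M] [Module R M]
    (n : ℕ) : M [⋀^Fin n]→ₗ[R] (⋀[R]^n M) :=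
  (ExteriorAlgebra.ιMulti R n).codRestrict (⋀[R]^n M) fun v =>
    ExteriorAlgebra.ιMulti_range R n (Set.mem_range_self v)

theorem gen_eq {R : Type*} [CommRing R] {n : ℕ} (s : R) (r : Fin n → R) :
    OmegaPow.gen s r = s • ιM R (Ω[R⁄ℤ]) n fun i => KaehlerDifferential.D ℤ R (r i) := rfl

theorem coe_ιM {R : Type*} [CommRing R] {M : Type*} [AddCommGroup M] [Module R M]
    {n : ℕ} (v : Fin n → M) :
    (ιM R M n v : ExteriorAlgebra R M) = ExteriorAlgebra.ιMulti R n v := rfl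

theorem span_range_ιM (R : Type*) [CommRing R] (M : Type*) [AddCommGroup M] [Module R M]
    (n : ℕ) : Submodule.span R (Set.range (ιM R M n)) = ⊤ := by
  rw [Submodule.eq_top_iff']
  intro x
  have hx : (x : ExteriorAlgebra R M) ∈
      Submodule.span R (Set.range (ExteriorAlgebra.ιMulti R n)) := by
    rw [ExteriorAlgebra.ιMulti_span_fixedDegree]; exact x.2
  have key : ∀ (w : ExteriorAlgebra R M),
      w ∈ Submodule.span R (Set.range (ExteriorAlgebra.ιMulti R n)) →
      ∀ h : w ∈ ⋀[R]^n M, (⟨w, h⟩ : ⋀[R]^n M) ∈ Submodule.span R (Set.range (ιM R M n)) := by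
    intro w hw
    induction hw using Submodule.span_induction with
    | mem w hw =>
      obtain ⟨v, rfl⟩ := hw
      intro h
      exact Submodule.subset_span ⟨v, Subtype.ext rfl⟩
    | zero =>
      intro h
      have : (⟨0, h⟩ : ⋀[R]^n M) = 0 := rfl
      rw [this]; exact Submodule.zero_mem _
    | add a b ha hb iha ihb =>
      intro h
      have ha' : a ∈ ⋀[R]^n M := by
        rw [← ExteriorAlgebra.ιMulti_span_fixedDegree]; exact ha
      have hb' : b ∈ ⋀[R]^n M := by
        rw [← ExteriorAlgebra.ιMulti_span_fixedDegree]; exact hb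
      have : (⟨a + b, h⟩ : ⋀[R]^n M) = ⟨a, ha'⟩ + ⟨b, hb'⟩ := rfl
      rw [this]; exact Submodule.add_mem _ (iha ha') (ihb hb')
    | smul c a ha iha =>
      intro h
      have ha' : a ∈ ⋀[R]^n M := by
        rw [← ExteriorAlgebra.ιMulti_span_fixedDegree]; exact ha
      have : (⟨c • a, h⟩ : ⋀[R]^n M) = c • ⟨a, ha'⟩ := rfl
      rw [this]; exact Submodule.smul_mem _ _ (iha ha')
  have := key _ hx x.2
  simpa using this

/-- If a set is stable under scalar multiplication, its span is contained in its additive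
closure. -/
theorem span_le_closure {R : Type*} [CommRing R] {M : Type*} [AddCommGroup M] [Module R M]
    {s : Set M} (hs : ∀ (r : R) (x : M), x ∈ s → r • x ∈ s) :
    ∀ x ∈ Submodule.span R s, x ∈ AddSubgroup.closure s := by
  have hsm : ∀ (r : R), ∀ x ∈ AddSubgroup.closure s, r • x ∈ AddSubgroup.closure s := by
    intro r x hx
    induction hx using AddSubgroup.closure_induction with
    | mem y hy => exact AddSubgroup.subset_closure (hs r y hy)
    | zero => rw [smul_zero]; exact AddSubgroup.zero_mem _
    | add a b _ _ ha hb => rw [smul_add]; exact AddSubgroup.add_mem _ ha hb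
    | neg a _ ha => rw [smul_neg]; exact AddSubgroup.neg_mem _ ha
  intro x hx
  induction hx using Submodule.span_induction with
  | mem y hy => exact AddSubgroup.subset_closure hy
  | zero => exact AddSubgroup.zero_mem _
  | add a b _ _ ha hb => exact AddSubgroup.add_mem _ ha hb
  | smul c a _ ha => exact hsm c a ha

end RelGenAux
namespace RelGenAux

variable {R : Type*} [CommRing R] (I : Ideal R) (n : ℕ)

/-- All pure differential forms. -/
def genAll : Set (OmegaPow R n) := {ω | ∃ (s : R) (r : Fin n → R), ω = OmegaPow.gen s r}

/-- The generating set from the statement. -/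
def genSet : Set (OmegaPow R n) :=
  {ω | ∃ x ∈ I, ∃ r : Fin n → R, ω = OmegaPow.gen x r} ∪
    {ω | ∃ (hn : 0 < n) (s : R) (f : Fin n → R), f ⟨0, hn⟩ ∈ I ∧ ω = OmegaPow.gen s f}

/-- The span of the generating set. -/
def CC : Submodule R (OmegaPow R n) := Submodule.span R (genSet I n)

/-- The degree-one relative forms (a lower bound for them). -/
def K1 : Submodule R (Ω[R⁄ℤ]) :=
  I • ⊤ ⊔ Submodule.span R (KaehlerDifferential.D ℤ R '' I)

theorem span_genAll : Submodule.span R (genAll (R := R) n) = ⊤ := by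
  rw [eq_top_iff, ← span_range_ιM R (Ω[R⁄ℤ]) n, Submodule.span_le]
  rintro _ ⟨v, rfl⟩
  refine multilinear_mem_of_span (ιM R (Ω[R⁄ℤ]) n).toMultilinearMap _
    (fun _ => Set.range (KaehlerDifferential.D ℤ R)) ?_ v
    (fun i => by rw [KaehlerDifferential.span_range_derivation]; trivial)
  intro v hv
  choose r hr using hv
  refine Submodule.subset_span ⟨1, r, ?_⟩
  show (ιM R (Ω[R⁄ℤ]) n) v = _
  rw [show v = fun i => KaehlerDifferential.D ℤ R (r i) from funext fun i => (hr i).symm,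
    gen_eq, one_smul]

theorem smul_mem_CC {x : R} (hx : x ∈ I) (ω : OmegaPow R n) : x • ω ∈ CC I n := by
  have hω : ω ∈ Submodule.span R (genAll (R := R) n) := by
    rw [span_genAll]; trivial
  induction hω using Submodule.span_induction with
  | mem ω hω =>
    obtain ⟨s, r, rfl⟩ := hω
    have : x • OmegaPow.gen s r = OmegaPow.gen (x * s) r := by
      rw [gen_eq, gen_eq, smul_smul]
    rw [this]
    exact Submodule.subset_span (Or.inl ⟨x * s, I.mul_mem_right s hx, r, rfl⟩)
  | zero => rw [smul_zero]; exact Submodule.zero_mem _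
  | add a b _ _ ha hb => rw [smul_add]; exact Submodule.add_mem _ ha hb
  | smul c a _ ha => rw [smul_comm]; exact Submodule.smul_mem _ _ ha

theorem ιM_mem_CC_of_D_mem {v : Fin n → Ω[R⁄ℤ]} {i : Fin n} {x : R} (hx : x ∈ I)
    (hvi : v i = KaehlerDifferential.D ℤ R x) : ιM R (Ω[R⁄ℤ]) n v ∈ CC I n := by
  classical
  refine multilinear_mem_of_span (ιM R (Ω[R⁄ℤ]) n).toMultilinearMap _
    (fun j => if j = i then {KaehlerDifferential.D ℤ R x}
      else Set.range (KaehlerDifferential.D ℤ R)) ?_ v ?_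
  · intro u hu
    show (ιM R (Ω[R⁄ℤ]) n) u ∈ CC I n
    have hfun : ∀ j, ∃ g : R, u j = KaehlerDifferential.D ℤ R g ∧ (j = i → g ∈ I) := by
      intro j
      have this' : u j ∈ (if j = i then ({KaehlerDifferential.D ℤ R x} : Set (Ω[R⁄ℤ]))
          else Set.range (KaehlerDifferential.D ℤ R)) := hu j
      by_cases hj : j = i
      · rw [if_pos hj] at this'
        exact ⟨x, by simpa using this', fun _ => hx⟩
      · rw [if_neg hj] at this'
        obtain ⟨g, hg⟩ := this'
        exact ⟨g, hg.symm, fun h => absurd h hj⟩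
    choose g hg hgI using hfun
    have hn : 0 < n := i.pos
    set σ : Equiv.Perm (Fin n) := Equiv.swap ⟨0, hn⟩ i with hσ
    have hperm : (ιM R (Ω[R⁄ℤ]) n) (u ∘ σ) = Equiv.Perm.sign σ • (ιM R (Ω[R⁄ℤ]) n) u :=
      AlternatingMap.map_perm (ιM R (Ω[R⁄ℤ]) n) u σ
    have husig : ιM R (Ω[R⁄ℤ]) n (u ∘ σ) ∈ CC I n := by
      have h1 : u ∘ σ = fun j => KaehlerDifferential.D ℤ R (g (σ j)) :=
        funext fun j => hg (σ j)
      rw [h1]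
      have h2 : (ιM R (Ω[R⁄ℤ]) n fun j => KaehlerDifferential.D ℤ R (g (σ j))) =
          OmegaPow.gen 1 (g ∘ σ) := by
        rw [gen_eq, one_smul]; rfl
      rw [h2]
      refine Submodule.subset_span (Or.inr ⟨hn, 1, g ∘ σ, ?_, rfl⟩)
      have h3 : σ ⟨0, hn⟩ = i := Equiv.swap_apply_left _ _
      simpa [Function.comp, h3] using hgI i rfl
    rcases Int.units_eq_one_or (Equiv.Perm.sign σ) with h | h
    · rw [h, one_smul] at hperm
      rw [← hperm]; exact husig
    · rw [h] at hperm
      have h4 : (ιM R (Ω[R⁄ℤ]) n) u = -((ιM R (Ω[R⁄ℤ]) n) (u ∘ σ)) := by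
        rw [hperm, Units.smul_def]
        simp
      rw [h4]
      exact Submodule.neg_mem _ husig
  · intro j
    show v j ∈ Submodule.span R (if j = i then ({KaehlerDifferential.D ℤ R x} : Set (Ω[R⁄ℤ]))
        else Set.range (KaehlerDifferential.D ℤ R))
    by_cases hj : j = i
    · rw [if_pos hj, hj, hvi]
      exact Submodule.subset_span rfl
    · rw [if_neg hj, KaehlerDifferential.span_range_derivation]; trivial

theorem ιM_mem_CC_of_K1 {v : Fin n → Ω[R⁄ℤ]} (i : Fin n) (hv : v i ∈ K1 I) :
    ιM R (Ω[R⁄ℤ]) n v ∈ CC I n := by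
  classical
  obtain ⟨a, ha, b, hb, hab⟩ := Submodule.mem_sup.mp hv
  have hsplit : ιM R (Ω[R⁄ℤ]) n v =
      ιM R (Ω[R⁄ℤ]) n (Function.update v i a) + ιM R (Ω[R⁄ℤ]) n (Function.update v i b) := by
    have h1 : v = Function.update v i (a + b) := by
      rw [hab, Function.update_eq_self]
    conv_lhs => rw [h1]
    exact (ιM R (Ω[R⁄ℤ]) n).toMultilinearMap.map_update_add v i a b
  rw [hsplit]
  refine Submodule.add_mem _ ?_ ?_
  · refine Submodule.smul_induction_on
      (p := fun y => ιM R (Ω[R⁄ℤ]) n (Function.update v i y) ∈ CC I n) ha ?_ ?_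
    · intro r hr m _
      have h5 : ιM R (Ω[R⁄ℤ]) n (Function.update v i (r • m)) =
          r • ιM R (Ω[R⁄ℤ]) n (Function.update v i m) :=
        (ιM R (Ω[R⁄ℤ]) n).toMultilinearMap.map_update_smul v i r m
      rw [h5]
      exact smul_mem_CC I n hr _
    · intro p q hp hq
      have h5 : ιM R (Ω[R⁄ℤ]) n (Function.update v i (p + q)) =
          ιM R (Ω[R⁄ℤ]) n (Function.update v i p) + ιM R (Ω[R⁄ℤ]) n (Function.update v i q) :=
        (ιM R (Ω[R⁄ℤ]) n).toMultilinearMap.map_update_add v i p q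
      rw [h5]
      exact Submodule.add_mem _ hp hq
  · refine Submodule.span_induction
      (p := fun y _ => ιM R (Ω[R⁄ℤ]) n (Function.update v i y) ∈ CC I n) ?_ ?_ ?_ ?_ hb
    · rintro y ⟨x, hx, rfl⟩
      exact ιM_mem_CC_of_D_mem I n hx (Function.update_self i _ v)
    · show ιM R (Ω[R⁄ℤ]) n (Function.update v i 0) ∈ CC I n
      have h5 : ιM R (Ω[R⁄ℤ]) n (Function.update v i 0) = 0 :=
        (ιM R (Ω[R⁄ℤ]) n).toMultilinearMap.map_coord_zero i (Function.update_self i 0 v)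
      rw [h5]; exact Submodule.zero_mem _
    · intro p q _ _ hp hq
      have h5 : ιM R (Ω[R⁄ℤ]) n (Function.update v i (p + q)) =
          ιM R (Ω[R⁄ℤ]) n (Function.update v i p) + ιM R (Ω[R⁄ℤ]) n (Function.update v i q) :=
        (ιM R (Ω[R⁄ℤ]) n).toMultilinearMap.map_update_add v i p q
      rw [h5]
      exact Submodule.add_mem _ hp hq
    · intro c y _ hy
      have h5 : ιM R (Ω[R⁄ℤ]) n (Function.update v i (c • y)) =
          c • ιM R (Ω[R⁄ℤ]) n (Function.update v i y) :=
        (ιM R (Ω[R⁄ℤ]) n).toMultilinearMap.map_update_smul v i c y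
      rw [h5]
      exact Submodule.smul_mem _ _ hy

end RelGenAux
namespace RelGenAux

variable {R : Type*} [CommRing R] (I : Ideal R) (n : ℕ)

theorem torsion_M1 : Module.IsTorsionBySet R (Ω[R⁄ℤ] ⧸ K1 I) (I : Set R) := by
  intro x a
  obtain ⟨ω, rfl⟩ := Submodule.Quotient.mk_surjective (K1 I) x
  rw [← Submodule.Quotient.mk_smul, Submodule.Quotient.mk_eq_zero]
  exact Submodule.mem_sup_left (Submodule.smul_mem_smul a.2 trivial)

theorem torsion_QQ : Module.IsTorsionBySet R (OmegaPow R n ⧸ CC I n) (I : Set R) := by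
  intro x a
  obtain ⟨ω, rfl⟩ := Submodule.Quotient.mk_surjective (CC I n) x
  rw [← Submodule.Quotient.mk_smul, Submodule.Quotient.mk_eq_zero]
  exact smul_mem_CC I n a.2 ω

/-- The `R ⧸ I`-module structure on `Ω¹ ⧸ K1`. -/
noncomputable def SModM1 : Module (R ⧸ I) (Ω[R⁄ℤ] ⧸ K1 I) :=
  (torsion_M1 I).module

/-- The `R ⧸ I`-module structure on `Ωⁿ ⧸ CC`. -/
noncomputable def SModQQ : Module (R ⧸ I) (OmegaPow R n ⧸ CC I n) :=
  (torsion_QQ I n).module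

theorem mk_smul_M1 (b : R) (x : Ω[R⁄ℤ] ⧸ K1 I) :
    letI := SModM1 I
    Ideal.Quotient.mk I b • x = b • x := rfl

theorem mk_smul_QQ (b : R) (x : OmegaPow R n ⧸ CC I n) :
    letI := SModQQ I n
    Ideal.Quotient.mk I b • x = b • x := rfl

/-- A set-theoretic section of `R → R ⧸ I`. -/
noncomputable def rep : R ⧸ I → R := Function.surjInv Ideal.Quotient.mk_surjective

theorem mk_rep (s : R ⧸ I) : Ideal.Quotient.mk I (rep I s) = s :=
  Function.surjInv_eq _ s

theorem D_welldef {a b : R} (h : Ideal.Quotient.mk I a = Ideal.Quotient.mk I b) :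
    (K1 I).mkQ (KaehlerDifferential.D ℤ R a) = (K1 I).mkQ (KaehlerDifferential.D ℤ R b) := by
  have hab : a - b ∈ I := Ideal.Quotient.eq.mp h
  rw [Submodule.mkQ_apply, Submodule.mkQ_apply, Submodule.Quotient.eq]
  rw [← map_sub]
  exact Submodule.mem_sup_right (Submodule.subset_span ⟨a - b, hab, rfl⟩)

/-- The underlying function of the induced derivation on `R ⧸ I`. -/
noncomputable def delta0 : R ⧸ I → Ω[R⁄ℤ] ⧸ K1 I :=
  fun s => (K1 I).mkQ (KaehlerDifferential.D ℤ R (rep I s))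

theorem delta0_mk (r : R) :
    delta0 I (Ideal.Quotient.mk I r) = (K1 I).mkQ (KaehlerDifferential.D ℤ R r) :=
  D_welldef I (by rw [mk_rep])

set_option synthInstance.maxHeartbeats 1000000 in
/-- The induced derivation, as an additive monoid morphism. -/
noncomputable def deltaAdd : (R ⧸ I) →+ (Ω[R⁄ℤ] ⧸ K1 I) where
  toFun := delta0 I
  map_zero' := by
    have : (0 : R ⧸ I) = Ideal.Quotient.mk I 0 := by simp
    rw [this, delta0_mk]
    simp
  map_add' s t := by
    show delta0 I (s + t) = delta0 I s + delta0 I t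
    have hs : s = Ideal.Quotient.mk I (rep I s) := (mk_rep I s).symm
    have ht : t = Ideal.Quotient.mk I (rep I t) := (mk_rep I t).symm
    rw [hs, ht, ← map_add, delta0_mk, delta0_mk, delta0_mk, map_add, map_add]

/-- The induced derivation `R ⧸ I → Ω¹_R ⧸ K1`. -/
noncomputable def delta :
    letI := SModM1 I
    Derivation ℤ (R ⧸ I) (Ω[R⁄ℤ] ⧸ K1 I) :=
  letI := SModM1 I
  { toLinearMap := (deltaAdd I).toIntLinearMap
    map_one_eq_zero' := by
      show delta0 I 1 = 0
      have : (1 : R ⧸ I) = Ideal.Quotient.mk I 1 := by simp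
      rw [this, delta0_mk]
      simp
    leibniz' := by
      intro a b
      show delta0 I (a * b) = a • delta0 I b + b • delta0 I a
      have ha : a = Ideal.Quotient.mk I (rep I a) := (mk_rep I a).symm
      have hb : b = Ideal.Quotient.mk I (rep I b) := (mk_rep I b).symm
      rw [ha, hb, ← map_mul, delta0_mk, delta0_mk, delta0_mk, Derivation.leibniz,
        map_add, map_smul, map_smul, mk_smul_M1, mk_smul_M1] }

/-- The induced map `Ω¹_{R⧸I} → Ω¹_R ⧸ K1`. -/
noncomputable def phi :
    letI := SModM1 I
    Ω[(R ⧸ I)⁄ℤ] →ₗ[R ⧸ I] (Ω[R⁄ℤ] ⧸ K1 I) :=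
  letI := SModM1 I
  (delta I).liftKaehlerDifferential

theorem phi_D (r : R) :
    phi I (KaehlerDifferential.D ℤ (R ⧸ I) (Ideal.Quotient.mk I r)) =
      (K1 I).mkQ (KaehlerDifferential.D ℤ R r) := by
  letI := SModM1 I
  show (delta I).liftKaehlerDifferential _ = _
  rw [Derivation.liftKaehlerDifferential_comp_D]
  show delta0 I (Ideal.Quotient.mk I r) = _
  exact delta0_mk I r

end RelGenAux
namespace RelGenAux

variable {R : Type*} [CommRing R] (I : Ideal R) (n : ℕ)

/-- A set-theoretic section of `Ω¹ → Ω¹ ⧸ K1`. -/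
noncomputable def lM : (Ω[R⁄ℤ] ⧸ K1 I) → Ω[R⁄ℤ] :=
  Function.surjInv (Submodule.Quotient.mk_surjective (K1 I))

theorem mkQ_lM (m : Ω[R⁄ℤ] ⧸ K1 I) : (K1 I).mkQ (lM I m) = m := by
  rw [Submodule.mkQ_apply]
  exact Function.surjInv_eq _ m

theorem W (t : Finset (Fin n)) :
    ∀ v w : Fin n → Ω[R⁄ℤ], (∀ i, v i - w i ∈ K1 I) → (∀ i ∉ t, v i = w i) →
      (CC I n).mkQ (ιM R (Ω[R⁄ℤ]) n v) = (CC I n).mkQ (ιM R (Ω[R⁄ℤ]) n w) := by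
  classical
  induction t using Finset.induction_on with
  | empty =>
    intro v w _ h2
    rw [funext fun i => h2 i (Finset.notMem_empty i)]
  | @insert a t ha IH =>
    intro v w h1 h2
    have hstep : (CC I n).mkQ (ιM R (Ω[R⁄ℤ]) n v) =
        (CC I n).mkQ (ιM R (Ω[R⁄ℤ]) n (Function.update v a (w a))) := by
      rw [← sub_eq_zero, ← map_sub]
      have hsub : ιM R (Ω[R⁄ℤ]) n (Function.update v a (v a - w a)) =
          ιM R (Ω[R⁄ℤ]) n v - ιM R (Ω[R⁄ℤ]) n (Function.update v a (w a)) := by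
        have h := (ιM R (Ω[R⁄ℤ]) n).toMultilinearMap.map_update_sub v a (v a) (w a)
        rw [Function.update_eq_self] at h
        exact h
      rw [← hsub, Submodule.mkQ_apply, Submodule.Quotient.mk_eq_zero]
      exact ιM_mem_CC_of_K1 I n a (by rw [Function.update_self]; exact h1 a)
    rw [hstep]
    refine IH (Function.update v a (w a)) w (fun i => ?_) (fun i hi => ?_)
    · by_cases hia : i = a
      · subst hia; rw [Function.update_self]; simpa using (K1 I).zero_mem
      · rw [Function.update_of_ne hia]; exact h1 i
    · by_cases hia : i = a
      · subst hia; exact Function.update_self _ _ _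
      · rw [Function.update_of_ne hia]
        exact h2 i (by simp [hia] at hi ⊢; exact hi)

theorem W' (v w : Fin n → Ω[R⁄ℤ]) (h : ∀ i, (K1 I).mkQ (v i) = (K1 I).mkQ (w i)) :
    (CC I n).mkQ (ιM R (Ω[R⁄ℤ]) n v) = (CC I n).mkQ (ιM R (Ω[R⁄ℤ]) n w) := by
  refine W I n Finset.univ v w (fun i => ?_) (fun i hi => absurd (Finset.mem_univ i) hi)
  have := h i
  rw [Submodule.mkQ_apply, Submodule.mkQ_apply, Submodule.Quotient.eq] at this
  exact this

/-- The underlying function of the descended alternating map. -/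
noncomputable def Fbar : (Fin n → Ω[R⁄ℤ] ⧸ K1 I) → (OmegaPow R n ⧸ CC I n) :=
  fun m => (CC I n).mkQ (ιM R (Ω[R⁄ℤ]) n fun i => lM I (m i))

theorem Fbar_mk (u : Fin n → Ω[R⁄ℤ]) :
    Fbar I n (fun i => (K1 I).mkQ (u i)) = (CC I n).mkQ (ιM R (Ω[R⁄ℤ]) n u) :=
  W' I n _ u fun i => by rw [mkQ_lM]

end RelGenAux
namespace RelGenAux

variable {R : Type*} [CommRing R] (I : Ideal R) (n : ℕ)

theorem update_mk (m : Fin n → Ω[R⁄ℤ] ⧸ K1 I) (i : Fin n) (c : Ω[R⁄ℤ]) :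
    Function.update m i ((K1 I).mkQ c) =
      fun j => (K1 I).mkQ (Function.update (fun k => lM I (m k)) i c j) := by
  funext j
  by_cases hj : j = i
  · subst hj; rw [Function.update_self, Function.update_self]
  · rw [Function.update_of_ne hj, Function.update_of_ne hj, mkQ_lM]

theorem Fbar_update (m : Fin n → Ω[R⁄ℤ] ⧸ K1 I) (i : Fin n) (c : Ω[R⁄ℤ]) :
    Fbar I n (Function.update m i ((K1 I).mkQ c)) =
      (CC I n).mkQ (ιM R (Ω[R⁄ℤ]) n (Function.update (fun k => lM I (m k)) i c)) := by
  rw [update_mk]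
  exact Fbar_mk I n _

set_option synthInstance.maxHeartbeats 1000000 in
/-- The descended alternating map on `Ω¹ ⧸ K1`. -/
noncomputable def Abar :
    letI := SModM1 I
    letI := SModQQ I n
    (Ω[R⁄ℤ] ⧸ K1 I) [⋀^Fin n]→ₗ[R ⧸ I] (OmegaPow R n ⧸ CC I n) :=
  letI := SModM1 I
  letI := SModQQ I n
  { toFun := Fbar I n
    map_update_add' := by
      intro inst m i x y
      have hi := Subsingleton.elim inst (instDecidableEqFin n)
      subst hi
      have hx : x = (K1 I).mkQ (lM I x) := (mkQ_lM I x).symm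
      have hy : y = (K1 I).mkQ (lM I y) := (mkQ_lM I y).symm
      have hxy : x + y = (K1 I).mkQ (lM I x + lM I y) := by
        rw [map_add, ← hx, ← hy]
      rw [hxy, Fbar_update]
      have hadd : (ιM R (Ω[R⁄ℤ]) n) (Function.update (fun k => lM I (m k)) i (lM I x + lM I y)) =
          (ιM R (Ω[R⁄ℤ]) n) (Function.update (fun k => lM I (m k)) i (lM I x)) +
          (ιM R (Ω[R⁄ℤ]) n) (Function.update (fun k => lM I (m k)) i (lM I y)) :=
        (ιM R (Ω[R⁄ℤ]) n).toMultilinearMap.map_update_add _ i _ _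
      rw [hadd, map_add]
      conv_rhs => rw [hx, hy, Fbar_update, Fbar_update]
    map_update_smul' := by
      intro inst m i c x
      have hi := Subsingleton.elim inst (instDecidableEqFin n)
      subst hi
      have hcx : c • x = (K1 I).mkQ (rep I c • lM I x) := by
        rw [map_smul, mkQ_lM, ← mk_smul_M1 I, mk_rep]
      rw [hcx, Fbar_update]
      have hsm : (ιM R (Ω[R⁄ℤ]) n) (Function.update (fun k => lM I (m k)) i (rep I c • lM I x)) =
          rep I c • (ιM R (Ω[R⁄ℤ]) n) (Function.update (fun k => lM I (m k)) i (lM I x)) :=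
        (ιM R (Ω[R⁄ℤ]) n).toMultilinearMap.map_update_smul _ i _ _
      rw [hsm, map_smul, ← mk_smul_QQ I n, mk_rep]
      conv_rhs => rw [show x = (K1 I).mkQ (lM I x) from (mkQ_lM I x).symm, Fbar_update]
    map_eq_zero_of_eq' := by
      intro v i j hEq hne
      show (CC I n).mkQ (ιM R (Ω[R⁄ℤ]) n fun k => lM I (v k)) = 0
      rw [AlternatingMap.map_eq_zero_of_eq (ιM R (Ω[R⁄ℤ]) n) _ (congrArg (lM I) hEq) hne,
        map_zero] }

set_option synthInstance.maxHeartbeats 1000000 in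
/-- The composite alternating map on `Ω¹_{R⧸I}`. -/
noncomputable def Acomp :
    letI := SModM1 I
    letI := SModQQ I n
    (Ω[(R ⧸ I)⁄ℤ]) [⋀^Fin n]→ₗ[R ⧸ I] (OmegaPow R n ⧸ CC I n) :=
  letI := SModM1 I
  letI := SModQQ I n
  (Abar I n).compLinearMap (phi I)

set_option synthInstance.maxHeartbeats 1000000 in
/-- The comparison map `⋀ⁿ Ω¹_{R⧸I} → Ωⁿ_R ⧸ CC`. -/
noncomputable def sigma0 :
    letI := SModQQ I n
    ExteriorAlgebra (R ⧸ I) (Ω[(R ⧸ I)⁄ℤ]) →ₗ[R ⧸ I] (OmegaPow R n ⧸ CC I n) :=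
  letI := SModM1 I
  letI := SModQQ I n
  ExteriorAlgebra.liftAlternating (Function.update 0 n (Acomp I n))

set_option synthInstance.maxHeartbeats 1000000 in
theorem sigma0_gen (s : R) (r : Fin n → R) :
    sigma0 I n ((OmegaPow.gen (Ideal.Quotient.mk I s)
        (fun i => Ideal.Quotient.mk I (r i)) : OmegaPow (R ⧸ I) n).1) = (CC I n).mkQ (OmegaPow.gen s r) := by
  letI := SModM1 I
  letI := SModQQ I n
  rw [gen_eq]
  rw [Submodule.coe_smul]
  refine (map_smul (sigma0 I n) _ _).trans ?_
  show Ideal.Quotient.mk I s • (ExteriorAlgebra.liftAlternating (Function.update 0 n (Acomp I n)))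
      ((ExteriorAlgebra.ιMulti (R ⧸ I) n)
        fun i => KaehlerDifferential.D ℤ (R ⧸ I) (Ideal.Quotient.mk I (r i))) =
    (CC I n).mkQ (OmegaPow.gen s r)
  rw [ExteriorAlgebra.liftAlternating_apply_ιMulti, Function.update_self]
  show Ideal.Quotient.mk I s • (Abar I n) (fun i => phi I
      (KaehlerDifferential.D ℤ (R ⧸ I) (Ideal.Quotient.mk I (r i)))) = _
  have hphi : (fun i => phi I (KaehlerDifferential.D ℤ (R ⧸ I) (Ideal.Quotient.mk I (r i)))) =
      fun i => (K1 I).mkQ (KaehlerDifferential.D ℤ R (r i)) :=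
    funext fun i => phi_D I (r i)
  rw [hphi]
  have habar : (Abar I n) (fun i => (K1 I).mkQ (KaehlerDifferential.D ℤ R (r i))) =
      (CC I n).mkQ (ιM R (Ω[R⁄ℤ]) n fun i => KaehlerDifferential.D ℤ R (r i)) :=
    Fbar_mk I n _
  rw [habar, mk_smul_QQ, ← map_smul, ← gen_eq]

theorem genAll_smul (r' : R) {ω : OmegaPow R n} (h : ω ∈ genAll (R := R) n) :
    r' • ω ∈ genAll (R := R) n := by
  obtain ⟨s, r, rfl⟩ := h
  exact ⟨r' * s, r, by rw [gen_eq, gen_eq, smul_smul]⟩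

theorem genSet_smul (r' : R) {ω : OmegaPow R n} (h : ω ∈ genSet I n) :
    r' • ω ∈ genSet I n := by
  rcases h with ⟨x, hx, r, rfl⟩ | ⟨hn, s, f, hf, rfl⟩
  · exact Or.inl ⟨r' * x, I.mul_mem_left r' hx, r, by rw [gen_eq, gen_eq, smul_smul]⟩
  · exact Or.inr ⟨hn, r' * s, f, hf, by rw [gen_eq, gen_eq, smul_smul]⟩

end RelGenAux
set_option maxHeartbeats 2000000
set_option synthInstance.maxHeartbeats 2000000

/-- For an ideal `I ⊆ R`, the relative module of differential forms
`Ω^n_{R,I}` is generated, as an abelian group, by the forms `x·dr₁ ∧ ⋯ ∧ drₙ` with `x ∈ I`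
and by the forms `s·df₁ ∧ ⋯ ∧ dfₙ` whose first differential `df₁` has `f₁ ∈ I`
(i.e. the forms `r₁·dx ∧ dr₂ ∧ ⋯ ∧ drₙ` with `x ∈ I`). -/
theorem relOmega_generated
    {R : Type*} [CommRing R] (I : Ideal R) (n : ℕ)
    (P : OmegaMapData (Ideal.Quotient.mk I)) :
    relOmega P n = AddSubgroup.closure
      ({ω | ∃ x ∈ I, ∃ r : Fin n → R, ω = OmegaPow.gen x r} ∪
       {ω | ∃ (hn : 0 < n) (s : R) (f : Fin n → R),
          f ⟨0, hn⟩ ∈ I ∧ ω = OmegaPow.gen s f}) := by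
  classical
  show relOmega P n = AddSubgroup.closure (RelGenAux.genSet I n)
  refine le_antisymm ?_ ?_
  · -- the relative forms are contained in the closure of the generators
    intro ω hω
    have hπ : P.π n ω = 0 := AddMonoidHom.mem_ker.mp hω
    have claim : ∀ ψ : OmegaPow R n,
        RelGenAux.sigma0 I n ((P.π n ψ : OmegaPow (R ⧸ I) n).1) = (RelGenAux.CC I n).mkQ ψ := by
      intro ψ
      have hmem : ψ ∈ AddSubgroup.closure (RelGenAux.genAll (R := R) n) := by
        refine RelGenAux.span_le_closure (fun r x hx => RelGenAux.genAll_smul n r hx) ψ ?_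
        rw [RelGenAux.span_genAll]; trivial
      induction hmem using AddSubgroup.closure_induction with
      | mem ψ hψ =>
        obtain ⟨s, r, rfl⟩ := hψ
        rw [P.isOmegaMap n s r]
        exact RelGenAux.sigma0_gen I n s r
      | zero =>
        rw [map_zero]
        show RelGenAux.sigma0 I n ((0 : OmegaPow (R ⧸ I) n).1) = _
        exact (map_zero _).trans (map_zero _).symm
      | add a b _ _ iha ihb =>
        simp only [map_add, Submodule.coe_add, iha, ihb]
        rw [← iha, ← ihb]; exact map_add _ _ _
      | neg a _ iha =>
        simp only [map_neg, Submodule.coe_neg, NegMemClass.coe_neg, iha]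
        rw [← iha]; exact map_neg _ _
    have h0 : (RelGenAux.CC I n).mkQ ω = 0 := by
      rw [← claim ω, hπ]
      show RelGenAux.sigma0 I n ((0 : OmegaPow (R ⧸ I) n).1) = 0
      exact map_zero _
    have hC : ω ∈ RelGenAux.CC I n := by
      rwa [Submodule.mkQ_apply, Submodule.Quotient.mk_eq_zero] at h0
    exact RelGenAux.span_le_closure (fun r x hx => RelGenAux.genSet_smul I n r hx) ω hC
  · -- the generators are relative forms
    rw [AddSubgroup.closure_le]
    rintro ω (⟨x, hx, r, rfl⟩ | ⟨hn, s, f, hf, rfl⟩)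
    · show OmegaPow.gen x r ∈ (P.π n).ker
      rw [AddMonoidHom.mem_ker, P.isOmegaMap n x r, RelGenAux.gen_eq,
        Ideal.Quotient.eq_zero_iff_mem.mpr hx, zero_smul]
    · show OmegaPow.gen s f ∈ (P.π n).ker
      rw [AddMonoidHom.mem_ker, P.isOmegaMap n s f, RelGenAux.gen_eq]
      have hzero : (RelGenAux.ιM (R ⧸ I) (Ω[(R ⧸ I)⁄ℤ]) n
          fun i => KaehlerDifferential.D ℤ (R ⧸ I) (Ideal.Quotient.mk I (f i))) = 0 := by
        refine (RelGenAux.ιM (R ⧸ I) (Ω[(R ⧸ I)⁄ℤ]) n).toMultilinearMap.map_coord_zero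
          ⟨0, hn⟩ ?_
        show KaehlerDifferential.D ℤ (R ⧸ I) (Ideal.Quotient.mk I (f ⟨0, hn⟩)) = 0
        rw [Ideal.Quotient.eq_zero_iff_mem.mpr hf, map_zero]
      erw [hzero]
      exact (smul_zero (Ideal.Quotient.mk I s) : _ • (0 : OmegaPow (R ⧸ I) n) = 0)
end
end

section
/- Let R be a commutative ring, I ⊆ R a nilpotent ideal, and N ≥ 1 with I^N = 0 and (N−1)! invertible in R. Suppose every element of R is a sum of units and that a Bloch map B : K^M_{n+1}(R,I) → Ω^n_{R,I}/dΩ^{n−1}_{R,I} exists for a natural number n ≥ 0. Then B is surjective. -/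
open scoped TensorProduct

noncomputable section

section Helpers

variable {R : Type*} [CommRing R]

theorem MyAux.smul_mem_addClosure {M : Type*} [AddCommGroup M] [Module R M] {s : Set M}
    (hs : ∀ (r : R), ∀ x ∈ s, r • x ∈ s) (r : R) {x : M}
    (hx : x ∈ AddSubgroup.closure s) : r • x ∈ AddSubgroup.closure s := by
  induction hx using AddSubgroup.closure_induction with
  | mem y hy => exact AddSubgroup.subset_closure (hs r y hy)
  | zero => rw [smul_zero]; exact zero_mem _
  | add y z hy hz ihy ihz => rw [smul_add]; exact add_mem ihy ihz
  | neg y hy ihy => rw [smul_neg]; exact neg_mem ihy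

theorem MyAux.span_subset_addClosure {M : Type*} [AddCommGroup M] [Module R M] {s : Set M}
    (hs : ∀ (r : R), ∀ x ∈ s, r • x ∈ s) {x : M}
    (hx : x ∈ Submodule.span R s) : x ∈ AddSubgroup.closure s := by
  induction hx using Submodule.span_induction with
  | mem y hy => exact AddSubgroup.subset_closure hy
  | zero => exact zero_mem _
  | add y z hy hz ihy ihz => exact add_mem ihy ihz
  | smul r y hy ihy => exact MyAux.smul_mem_addClosure hs r ihy

theorem MyAux.slot_induction {M N : Type*} [AddCommGroup M] [AddCommGroup N] {n : ℕ}
    (μ : MultilinearMap ℤ (fun _ : Fin n => M) N) (s : Fin n → Set M) (P : AddSubgroup N)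
    (h : ∀ v : Fin n → M, (∀ i, v i ∈ s i) → μ v ∈ P) :
    ∀ v : Fin n → M, (∀ i, v i ∈ AddSubgroup.closure (s i)) → μ v ∈ P := by
  suffices H : ∀ k : ℕ, ∀ v : Fin n → M, (∀ i, v i ∈ AddSubgroup.closure (s i)) →
      (∀ i : Fin n, k ≤ (i : ℕ) → v i ∈ s i) → μ v ∈ P by
    intro v hv
    exact H n v hv fun i hi => absurd i.isLt (by omega)
  intro k
  induction k with
  | zero => exact fun v hv h0 => h v fun i => h0 i (Nat.zero_le _)
  | succ k ih =>
    intro v hv hk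
    by_cases hkn : k < n
    · set i₀ : Fin n := ⟨k, hkn⟩ with hi₀
      have key : ∀ x, x ∈ AddSubgroup.closure (s i₀) → μ (Function.update v i₀ x) ∈ P := by
        intro x hx
        induction hx using AddSubgroup.closure_induction with
        | mem y hy =>
          refine ih _ (fun i => ?_) (fun i hik => ?_)
          · rcases eq_or_ne i i₀ with rfl | hne
            · rw [Function.update_self]; exact AddSubgroup.subset_closure hy
            · rw [Function.update_of_ne hne]; exact hv i
          · rcases eq_or_ne i i₀ with rfl | hne
            · rw [Function.update_self]; exact hy
            · rw [Function.update_of_ne hne]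
              refine hk i ?_
              have : (i : ℕ) ≠ k := fun hik' => hne (Fin.ext (by simp [hi₀, hik']))
              omega
        | zero =>
          rw [show (0 : M) = (0 : M) from rfl]
          have : μ (Function.update v i₀ (0 : M)) = 0 :=
            μ.map_coord_zero i₀ (Function.update_self _ _ _)
          rw [this]; exact zero_mem _
        | add y z hy hz ihy ihz =>
          rw [μ.map_update_add]; exact add_mem ihy ihz
        | neg y hy ihy =>
          have hsm := μ.map_update_smul v i₀ (-1 : ℤ) y
          rw [neg_one_zsmul] at hsm
          rw [hsm, neg_one_zsmul]
          exact neg_mem ihy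
      have := key (v i₀) (hv i₀)
      rwa [Function.update_eq_self] at this
    · exact ih v hv fun i hik => absurd i.isLt (by omega)

end Helpers

section OmegaInfra

variable {R : Type*} [CommRing R]

namespace MyAux

/-- The alternating map into the `n`-th exterior power. -/
def iMultiP (R : Type*) [CommRing R] (n : ℕ) :
    (Ω[R⁄ℤ]) [⋀^Fin n]→ₗ[R] OmegaPow R n :=
  (ExteriorAlgebra.ιMulti R n).codRestrict (⋀[R]^n (Ω[R⁄ℤ]))
    (fun v => ExteriorAlgebra.ιMulti_range R n (Set.mem_range_self v))

theorem gen_eq {n : ℕ} (s : R) (f : Fin n → R) :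
    OmegaPow.gen s f = s • iMultiP R n (fun i => KaehlerDifferential.D ℤ R (f i)) := rfl

theorem smul_gen {n : ℕ} (r s : R) (f : Fin n → R) :
    r • OmegaPow.gen s f = OmegaPow.gen (r * s) f := by
  rw [gen_eq, gen_eq, smul_smul]

theorem gen_add {n : ℕ} (s t : R) (f : Fin n → R) :
    OmegaPow.gen (s + t) f = OmegaPow.gen s f + OmegaPow.gen t f := by
  rw [gen_eq, gen_eq, gen_eq, add_smul]

theorem gen_zero {n : ℕ} (f : Fin n → R) : OmegaPow.gen (0 : R) f = 0 := by
  rw [gen_eq, zero_smul]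

theorem gen_slot_zero {n : ℕ} (s : R) (f : Fin n → R) (i : Fin n) (hf : f i = 0) :
    OmegaPow.gen s f = 0 := by
  rw [gen_eq]
  have : (iMultiP R n) (fun j => KaehlerDifferential.D ℤ R (f j)) = 0 :=
    (iMultiP R n).toMultilinearMap.map_coord_zero i (by simp [hf])
  rw [this, smul_zero]

theorem span_iMultiP (n : ℕ) :
    Submodule.span R (Set.range (iMultiP R n)) = ⊤ := by
  apply Submodule.map_injective_of_injective (Submodule.injective_subtype (⋀[R]^n (Ω[R⁄ℤ])))
  rw [Submodule.map_span, Submodule.map_subtype_top]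
  have himg : (⋀[R]^n (Ω[R⁄ℤ])).subtype '' Set.range (iMultiP R n) =
      Set.range (ExteriorAlgebra.ιMulti R n (M := Ω[R⁄ℤ])) := by
    ext x
    constructor
    · rintro ⟨y, ⟨v, rfl⟩, rfl⟩; exact ⟨v, rfl⟩
    · rintro ⟨v, rfl⟩; exact ⟨iMultiP R n v, ⟨v, rfl⟩, rfl⟩
  rw [himg]
  exact ExteriorAlgebra.ιMulti_span_fixedDegree R n

/-- `gen` as a `ℤ`-multilinear map in the slots. -/
def genMl (R : Type*) [CommRing R] (n : ℕ) :
    MultilinearMap ℤ (fun _ : Fin n => R) (OmegaPow R n) :=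
  ((iMultiP R n).toMultilinearMap.restrictScalars ℤ).compLinearMap
    (fun _ => ((KaehlerDifferential.D ℤ R).toLinearMap.restrictScalars ℤ))

theorem genMl_apply {n : ℕ} (f : Fin n → R) :
    genMl R n f = iMultiP R n (fun i => KaehlerDifferential.D ℤ R (f i)) := rfl

theorem gen_eq_genMl {n : ℕ} (s : R) (f : Fin n → R) :
    OmegaPow.gen s f = s • genMl R n f := rfl

end MyAux

end OmegaInfra

section RelSub

variable {R : Type*} [CommRing R]

namespace MyAux

/-- Generators of the relative forms: `I`-coefficients. -/
def genSet1 (I : Ideal R) (n : ℕ) : Set (OmegaPow R n) :=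
  {z | ∃ (s : R) (f : Fin n → R), s ∈ I ∧ z = OmegaPow.gen s f}

/-- Generators of the relative forms: a slot in `I`. -/
def genSet2 (I : Ideal R) (n : ℕ) : Set (OmegaPow R n) :=
  {z | ∃ (s : R) (f : Fin n → R) (i : Fin n), f i ∈ I ∧ z = OmegaPow.gen s f}

/-- The candidate description of the relative forms `Ω^n_{R,I}`. -/
def relSub (I : Ideal R) (n : ℕ) : Submodule R (OmegaPow R n) :=
  Submodule.span R (genSet1 I n ∪ genSet2 I n)

theorem genSet_union_smul_closed (I : Ideal R) (n : ℕ) (r : R) :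
    ∀ x ∈ genSet1 I n ∪ genSet2 I n, r • x ∈ genSet1 I n ∪ genSet2 I n := by
  rintro x (⟨s, f, hs, rfl⟩ | ⟨s, f, i, hf, rfl⟩)
  · exact Or.inl ⟨r * s, f, I.mul_mem_left r hs, smul_gen r s f⟩
  · exact Or.inr ⟨r * s, f, i, hf, smul_gen r s f⟩

/-- The set `{c • dt}` generates `Ω¹` additively. -/
theorem mem_closure_cD (x : Ω[R⁄ℤ]) :
    x ∈ AddSubgroup.closure
      {y : Ω[R⁄ℤ] | ∃ (c : R) (t : R), y = c • KaehlerDifferential.D ℤ R t} := by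
  have hsp : x ∈ Submodule.span R
      {y : Ω[R⁄ℤ] | ∃ (c : R) (t : R), y = c • KaehlerDifferential.D ℤ R t} := by
    have h1 : Submodule.span R (Set.range (KaehlerDifferential.D ℤ R)) ≤
        Submodule.span R
          {y : Ω[R⁄ℤ] | ∃ (c : R) (t : R), y = c • KaehlerDifferential.D ℤ R t} :=
      Submodule.span_mono (by rintro y ⟨t, rfl⟩; exact ⟨1, t, (one_smul _ _).symm⟩)
    have h2 : x ∈ Submodule.span R (Set.range (KaehlerDifferential.D ℤ R)) := by
      rw [KaehlerDifferential.span_range_derivation]; trivial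
    exact h1 h2
  refine span_subset_addClosure ?_ hsp
  rintro r y ⟨c, t, rfl⟩
  exact ⟨r * c, t, by rw [smul_smul]⟩

theorem smul_prod_iMultiP {n : ℕ} (c : Fin n → R) (t : Fin n → R) :
    iMultiP R n (fun i => c i • KaehlerDifferential.D ℤ R (t i)) =
      OmegaPow.gen (∏ i, c i) t := by
  rw [gen_eq]
  exact (iMultiP R n).toMultilinearMap.map_smul_univ c
    (fun i => KaehlerDifferential.D ℤ R (t i))

/-- Multiplication by an element of `I` lands in `relSub`. -/
theorem smul_mem_relSub (I : Ideal R) (n : ℕ) {a : R} (ha : a ∈ I) (x : OmegaPow R n) :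
    a • x ∈ relSub I n := by
  have hT : (⊤ : Submodule R (OmegaPow R n)) ≤
      Submodule.comap (LinearMap.lsmul R (OmegaPow R n) a) (relSub I n) := by
    rw [← span_iMultiP (R := R) n, Submodule.span_le]
    rintro _ ⟨v, rfl⟩
    have key : ∀ w : Fin n → Ω[R⁄ℤ],
        (∀ i, w i ∈ {y : Ω[R⁄ℤ] | ∃ (c : R) (t : R), y = c • KaehlerDifferential.D ℤ R t}) →
        ((iMultiP R n).toMultilinearMap.restrictScalars ℤ) w ∈
          AddSubgroup.comap ((LinearMap.lsmul R (OmegaPow R n) a).toAddMonoidHom)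
            (relSub I n).toAddSubgroup := by
      intro w hw
      choose c t hct using hw
      have hw' : w = fun i => c i • KaehlerDifferential.D ℤ R (t i) := funext hct
      simp only [AddSubgroup.mem_comap, LinearMap.toAddMonoidHom_coe, LinearMap.lsmul_apply,
        Submodule.mem_toAddSubgroup, MultilinearMap.coe_restrictScalars]
      rw [show ((iMultiP R n).toMultilinearMap w) = iMultiP R n w from rfl, hw',
        smul_prod_iMultiP, smul_gen]
      exact Submodule.subset_span (Or.inl ⟨a * ∏ i, c i, t, I.mul_mem_right _ ha, rfl⟩)
    have := slot_induction ((iMultiP R n).toMultilinearMap.restrictScalars ℤ)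
      (fun _ => {y : Ω[R⁄ℤ] | ∃ (c : R) (t : R), y = c • KaehlerDifferential.D ℤ R t})
      (AddSubgroup.comap ((LinearMap.lsmul R (OmegaPow R n) a).toAddMonoidHom)
        (relSub I n).toAddSubgroup) key v (fun i => mem_closure_cD (v i))
    simpa using this
  exact hT trivial

/-- The submodule of `Ω¹` which must be killed. -/
def Ksub (I : Ideal R) : Submodule R (Ω[R⁄ℤ]) :=
  I • ⊤ ⊔ Submodule.span R (KaehlerDifferential.D ℤ R '' (I : Set R))

/-- A wedge with a slot in `Ksub` lands in `relSub`. -/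
theorem iMultiP_slot_Ksub (I : Ideal R) (n : ℕ) (v : Fin n → Ω[R⁄ℤ]) (i : Fin n)
    (hv : v i ∈ Ksub I) : iMultiP R n v ∈ relSub I n := by
  classical
  let T : Submodule R (Ω[R⁄ℤ]) :=
    { carrier := {x | iMultiP R n (Function.update v i x) ∈ relSub I n}
      add_mem' := fun {x y} hx hy => by
        simp only [Set.mem_setOf_eq] at hx hy ⊢
        rw [(iMultiP R n).map_update_add v i x y]
        exact add_mem hx hy
      zero_mem' := by
        simp only [Set.mem_setOf_eq]
        rw [(iMultiP R n).map_coord_zero i (Function.update_self _ _ _)]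
        exact zero_mem _
      smul_mem' := fun c {x} hx => by
        simp only [Set.mem_setOf_eq] at hx ⊢
        rw [(iMultiP R n).map_update_smul v i c x]
        exact Submodule.smul_mem _ c hx }
  have hKT : Ksub I ≤ T := by
    refine sup_le ?_ ?_
    · refine Submodule.smul_le.2 fun a ha m _ => ?_
      show iMultiP R n (Function.update v i (a • m)) ∈ relSub I n
      rw [(iMultiP R n).map_update_smul v i a m]
      exact smul_mem_relSub I n ha _
    · rw [Submodule.span_le]
      rintro _ ⟨b, hb, rfl⟩
      show iMultiP R n (Function.update v i (KaehlerDifferential.D ℤ R b)) ∈ relSub I n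
      set sfun : Fin n → Set (Ω[R⁄ℤ]) := fun j =>
        {y | ∃ (c : R) (t : R),
          y = c • KaehlerDifferential.D ℤ R t ∧ (j = i → c = 1 ∧ t ∈ I)} with hsfun
      have key : ∀ w : Fin n → Ω[R⁄ℤ], (∀ j, w j ∈ sfun j) →
          ((iMultiP R n).toMultilinearMap.restrictScalars ℤ) w ∈
            (relSub I n).toAddSubgroup := by
        intro w hw
        choose c t hct hcond using hw
        have hw' : w = fun j => c j • KaehlerDifferential.D ℤ R (t j) := funext hct
        simp only [Submodule.mem_toAddSubgroup, MultilinearMap.coe_restrictScalars]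
        rw [show ((iMultiP R n).toMultilinearMap w) = iMultiP R n w from rfl, hw',
          smul_prod_iMultiP]
        exact Submodule.subset_span (Or.inr ⟨∏ j, c j, t, i, (hcond i rfl).2, rfl⟩)
      have hmem : ∀ j, Function.update v i (KaehlerDifferential.D ℤ R b) j ∈
          AddSubgroup.closure (sfun j) := by
        intro j
        rcases eq_or_ne j i with rfl | hne
        · rw [Function.update_self]
          exact AddSubgroup.subset_closure
            ⟨1, b, (one_smul _ _).symm, fun _ => ⟨rfl, hb⟩⟩
        · rw [Function.update_of_ne hne]
          have hsub : {y : Ω[R⁄ℤ] | ∃ (c : R) (t : R),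
              y = c • KaehlerDifferential.D ℤ R t} ⊆ sfun j := by
            rintro y ⟨c, t, rfl⟩
            exact ⟨c, t, rfl, fun hji => absurd hji hne⟩
          exact AddSubgroup.closure_mono hsub (mem_closure_cD (v j))
      have := slot_induction ((iMultiP R n).toMultilinearMap.restrictScalars ℤ) sfun
        (relSub I n).toAddSubgroup key _ hmem
      simpa using this
  have h2 : iMultiP R n (Function.update v i (v i)) ∈ relSub I n := hKT hv
  rwa [Function.update_eq_self] at h2

end MyAux

end RelSub

section Gens

variable {R : Type*} [CommRing R]

namespace MyAux

/-- All `gen`erators. -/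
def genAll (R : Type*) [CommRing R] (n : ℕ) : Set (OmegaPow R n) :=
  {z | ∃ (s : R) (f : Fin n → R), z = OmegaPow.gen s f}

theorem mem_closure_genAll {n : ℕ} (x : OmegaPow R n) :
    x ∈ AddSubgroup.closure (genAll R n) := by
  have hx : x ∈ Submodule.span R (Set.range (iMultiP R n)) := by
    rw [span_iMultiP]; trivial
  induction hx using Submodule.span_induction with
  | mem z hz =>
    obtain ⟨v, rfl⟩ := hz
    have key : ∀ w : Fin n → Ω[R⁄ℤ],
        (∀ i, w i ∈ {y : Ω[R⁄ℤ] | ∃ (c : R) (t : R), y = c • KaehlerDifferential.D ℤ R t}) →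
        ((iMultiP R n).toMultilinearMap.restrictScalars ℤ) w ∈
          AddSubgroup.closure (genAll R n) := by
      intro w hw
      choose c t hct using hw
      have hw' : w = fun i => c i • KaehlerDifferential.D ℤ R (t i) := funext hct
      rw [show (((iMultiP R n).toMultilinearMap.restrictScalars ℤ) w) = iMultiP R n w from rfl,
        hw', smul_prod_iMultiP]
      exact AddSubgroup.subset_closure ⟨_, _, rfl⟩
    have := slot_induction ((iMultiP R n).toMultilinearMap.restrictScalars ℤ)
      (fun _ => {y : Ω[R⁄ℤ] | ∃ (c : R) (t : R), y = c • KaehlerDifferential.D ℤ R t})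
      (AddSubgroup.closure (genAll R n)) key v (fun i => mem_closure_cD (v i))
    simpa using this
  | zero => exact zero_mem _
  | add y z hy hz ihy ihz => exact add_mem ihy ihz
  | smul r y hy ihy =>
    refine smul_mem_addClosure ?_ r ihy
    rintro r' z ⟨s, f, rfl⟩
    exact ⟨r' * s, f, smul_gen r' s f⟩

end MyAux

end Gens

section Sigma

variable {R : Type*} [CommRing R]

namespace MyAux

set_option maxHeartbeats 1600000 in
set_option synthInstance.maxHeartbeats 400000 in
theorem ker_pi_le_relSub (I : Ideal R) (P : OmegaMapData (Ideal.Quotient.mk I)) (n : ℕ)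
    (ω : OmegaPow R n) (hω : P.π n ω = 0) : ω ∈ relSub I n := by
  classical
  -- torsion module structures
  have tor1 : Module.IsTorsionBySet R (Ω[R⁄ℤ] ⧸ Ksub I) ↑I := by
    rintro x ⟨a, ha⟩
    obtain ⟨y, rfl⟩ := Submodule.Quotient.mk_surjective _ x
    rw [← Submodule.Quotient.mk_smul, Submodule.Quotient.mk_eq_zero]
    exact (le_sup_left : I • ⊤ ≤ Ksub I) (Submodule.smul_mem_smul ha Submodule.mem_top)
  have torn : Module.IsTorsionBySet R (OmegaPow R n ⧸ relSub I n) ↑I := by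
    rintro x ⟨a, ha⟩
    obtain ⟨y, rfl⟩ := Submodule.Quotient.mk_surjective _ x
    rw [← Submodule.Quotient.mk_smul, Submodule.Quotient.mk_eq_zero]
    exact smul_mem_relSub I n ha y
  -- the underlying additive map of the derivation (defined before the exotic instances)
  set dfun : R ⧸ I → (Ω[R⁄ℤ] ⧸ Ksub I) := fun c =>
    Quotient.liftOn' c (fun r => Submodule.Quotient.mk (KaehlerDifferential.D ℤ R r))
      (by
        intro a b hab
        have hab' : a - b ∈ I := by rwa [Submodule.quotientRel_def] at hab
        rw [Submodule.Quotient.eq, ← map_sub]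
        exact (le_sup_right : Submodule.span R (KaehlerDifferential.D ℤ R '' ↑I) ≤ Ksub I)
          (Submodule.subset_span ⟨a - b, hab', rfl⟩)) with hdfun
  have dfun_mk : ∀ r : R, dfun (Ideal.Quotient.mk I r) =
      Submodule.Quotient.mk (KaehlerDifferential.D ℤ R r) := fun r => rfl
  set dlin : (R ⧸ I) →ₗ[ℤ] (Ω[R⁄ℤ] ⧸ Ksub I) :=
    (AddMonoidHom.mk' dfun (by
      intro a b
      obtain ⟨a, rfl⟩ := Ideal.Quotient.mk_surjective (I := I) a
      obtain ⟨b, rfl⟩ := Ideal.Quotient.mk_surjective (I := I) b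
      rw [← map_add (Ideal.Quotient.mk I), dfun_mk, dfun_mk, dfun_mk, map_add,
        Submodule.Quotient.mk_add])).toIntLinearMap with hdlin
  letI mod1 : Module (R ⧸ I) (Ω[R⁄ℤ] ⧸ Ksub I) := tor1.module
  letI modn : Module (R ⧸ I) (OmegaPow R n ⧸ relSub I n) := torn.module
  have mk1_smul : ∀ (b : R) (x : Ω[R⁄ℤ] ⧸ Ksub I), Ideal.Quotient.mk I b • x = b • x :=
    fun b x => Module.IsTorsionBySet.mk_smul tor1 b x
  have mkn_smul : ∀ (b : R) (x : OmegaPow R n ⧸ relSub I n),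
      Ideal.Quotient.mk I b • x = b • x :=
    fun b x => Module.IsTorsionBySet.mk_smul torn b x
  set δ : Derivation ℤ (R ⧸ I) (Ω[R⁄ℤ] ⧸ Ksub I) :=
    { toLinearMap := dlin
      map_one_eq_zero' := by
        show dfun 1 = 0
        rw [show (1 : R ⧸ I) = Ideal.Quotient.mk I 1 from (map_one _).symm, dfun_mk,
          Derivation.map_one_eq_zero, Submodule.Quotient.mk_zero]
      leibniz' := by
        intro a b
        obtain ⟨a, rfl⟩ := Ideal.Quotient.mk_surjective (I := I) a
        obtain ⟨b, rfl⟩ := Ideal.Quotient.mk_surjective (I := I) b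
        show dfun (Ideal.Quotient.mk I a * Ideal.Quotient.mk I b) =
          Ideal.Quotient.mk I a • dfun (Ideal.Quotient.mk I b) +
          Ideal.Quotient.mk I b • dfun (Ideal.Quotient.mk I a)
        rw [← map_mul (Ideal.Quotient.mk I), dfun_mk, dfun_mk, dfun_mk, Derivation.leibniz,
          Submodule.Quotient.mk_add, Submodule.Quotient.mk_smul, Submodule.Quotient.mk_smul,
          mk1_smul, mk1_smul] } with hδ
  have δ_mk : ∀ r : R, δ (Ideal.Quotient.mk I r) =
      Submodule.Quotient.mk (KaehlerDifferential.D ℤ R r) := fun r => dfun_mk r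
  set φ : Ω[(R ⧸ I)⁄ℤ] →ₗ[R ⧸ I] (Ω[R⁄ℤ] ⧸ Ksub I) := δ.liftKaehlerDifferential with hφdef
  have φ_D : ∀ c : R ⧸ I, φ (KaehlerDifferential.D ℤ (R ⧸ I) c) = δ c :=
    fun c => Derivation.liftKaehlerDifferential_comp_D δ c
  -- the alternating map on Ω¹ with values in the quotient
  set w' : (Ω[R⁄ℤ]) [⋀^Fin n]→ₗ[R] (OmegaPow R n ⧸ relSub I n) :=
    ((relSub I n).mkQ).compAlternatingMap (iMultiP R n) with hw'def
  have w'_apply : ∀ v : Fin n → Ω[R⁄ℤ], w' v = Submodule.Quotient.mk (iMultiP R n v) :=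
    fun v => rfl
  have hw'K : ∀ (v : Fin n → Ω[R⁄ℤ]) (i : Fin n), v i ∈ Ksub I → w' v = 0 := by
    intro v i hvi
    rw [w'_apply, Submodule.Quotient.mk_eq_zero]
    exact iMultiP_slot_Ksub I n v i hvi
  have wd2 : ∀ v v' : Fin n → Ω[R⁄ℤ], (∀ i, v i - v' i ∈ Ksub I) → w' v = w' v' := by
    suffices H : ∀ s : Finset (Fin n), ∀ v v' : Fin n → Ω[R⁄ℤ],
        (∀ i, v i - v' i ∈ Ksub I) → (∀ i ∉ s, v i = v' i) → w' v = w' v' by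
      intro v v' h
      exact H Finset.univ v v' h (fun i hi => absurd (Finset.mem_univ i) hi)
    intro s
    induction s using Finset.induction_on with
    | empty =>
      intro v v' _ h
      congr 1
      exact funext fun i => h i (Finset.notMem_empty i)
    | @insert i s his ih =>
      intro v v' hK hout
      have h1 : w' (Function.update v i (v i - v' i)) = 0 :=
        hw'K _ i (by rw [Function.update_self]; exact hK i)
      have h2 := w'.map_update_sub v i (v i) (v' i)
      rw [Function.update_eq_self] at h2
      have step : w' v = w' (Function.update v i (v' i)) := by
        rw [h1] at h2; exact (sub_eq_zero.mp h2.symm)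
      rw [step]
      refine ih _ _ (fun j => ?_) (fun j hj => ?_)
      · rcases eq_or_ne j i with rfl | hne
        · rw [Function.update_self, sub_self]; exact zero_mem _
        · rw [Function.update_of_ne hne]; exact hK j
      · rcases eq_or_ne j i with rfl | hne
        · rw [Function.update_self]
        · rw [Function.update_of_ne hne]
          exact hout j (by simp [Finset.mem_insert, hj, hne])
  -- lifting the alternating map to Ω¹/K
  have mk_out : ∀ x : (Ω[R⁄ℤ] ⧸ Ksub I), Submodule.Quotient.mk x.out = x := fun x => by
    rw [← Submodule.Quotient.mk''_eq_mk]; exact Quotient.out_eq' x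
  have out_sub : ∀ (x : Ω[R⁄ℤ] ⧸ Ksub I) (y : Ω[R⁄ℤ]),
      Submodule.Quotient.mk y = x → x.out - y ∈ Ksub I := by
    intro x y hy
    rw [← Submodule.Quotient.eq, mk_out, hy]
  set ψf : (Fin n → (Ω[R⁄ℤ] ⧸ Ksub I)) → (OmegaPow R n ⧸ relSub I n) :=
    fun v => w' (fun i => (v i).out) with hψf
  have ψf_mk : ∀ v : Fin n → Ω[R⁄ℤ], ψf (fun i => Submodule.Quotient.mk (v i)) = w' v := by
    intro v
    exact wd2 _ _ fun i => out_sub _ _ rfl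
  set ψ : (Ω[R⁄ℤ] ⧸ Ksub I) [⋀^Fin n]→ₗ[R ⧸ I] (OmegaPow R n ⧸ relSub I n) :=
    { toFun := ψf
      map_update_add' := by
        intro _inst v i x y
        have hupd : ∀ z : Ω[R⁄ℤ] ⧸ Ksub I,
            (fun j => ((Function.update v i z) j).out) =
              Function.update (fun j => (v j).out) i z.out := by
          intro z
          funext j
          rcases eq_or_ne j i with rfl | hne
          · rw [Function.update_self, Function.update_self]
          · rw [Function.update_of_ne hne, Function.update_of_ne hne]
        show ψf (Function.update v i (x + y)) =
          ψf (Function.update v i x) + ψf (Function.update v i y)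
        simp only [hψf]
        rw [hupd, hupd, hupd]
        have e1 : w' (Function.update (fun j => (v j).out) i (x + y).out) =
            w' (Function.update (fun j => (v j).out) i (x.out + y.out)) := by
          apply wd2
          intro j
          rcases eq_or_ne j i with rfl | hne
          · rw [Function.update_self, Function.update_self, ← Submodule.Quotient.eq,
              Submodule.Quotient.mk_add, mk_out, mk_out, mk_out]
          · rw [Function.update_of_ne hne, Function.update_of_ne hne, sub_self]
            exact zero_mem _
        rw [e1, w'.map_update_add]
      map_update_smul' := by
        intro _inst v i c x
        obtain ⟨r, rfl⟩ := Ideal.Quotient.mk_surjective (I := I) c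
        have hupd : ∀ z : Ω[R⁄ℤ] ⧸ Ksub I,
            (fun j => ((Function.update v i z) j).out) =
              Function.update (fun j => (v j).out) i z.out := by
          intro z
          funext j
          rcases eq_or_ne j i with rfl | hne
          · rw [Function.update_self, Function.update_self]
          · rw [Function.update_of_ne hne, Function.update_of_ne hne]
        show ψf (Function.update v i (Ideal.Quotient.mk I r • x)) =
          Ideal.Quotient.mk I r • ψf (Function.update v i x)
        simp only [hψf]
        rw [hupd, hupd]
        have e1 : w' (Function.update (fun j => (v j).out) i (Ideal.Quotient.mk I r • x).out) =
            w' (Function.update (fun j => (v j).out) i (r • x.out)) := by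
          apply wd2
          intro j
          rcases eq_or_ne j i with rfl | hne
          · rw [Function.update_self, Function.update_self, ← Submodule.Quotient.eq,
              Submodule.Quotient.mk_smul, mk_out, mk_out, mk1_smul]
          · rw [Function.update_of_ne hne, Function.update_of_ne hne, sub_self]
            exact zero_mem _
        rw [e1, w'.map_update_smul, mkn_smul]
      map_eq_zero_of_eq' := by
        intro v i j hv hij
        refine w'.map_eq_zero_of_eq (fun k => (v k).out) ?_ hij
        show (v i).out = (v j).out
        rw [hv] } with hψ
  have ψ_apply : ∀ v : Fin n → (Ω[R⁄ℤ] ⧸ Ksub I), ψ v = ψf v := fun v => rfl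
  -- the induced map on the exterior algebra of Ω_{R/I}
  set A : (Ω[(R ⧸ I)⁄ℤ]) [⋀^Fin n]→ₗ[R ⧸ I] (OmegaPow R n ⧸ relSub I n) :=
    ψ.compLinearMap φ with hA
  set F : ∀ i : ℕ, (Ω[(R ⧸ I)⁄ℤ]) [⋀^Fin i]→ₗ[R ⧸ I] (OmegaPow R n ⧸ relSub I n) :=
    Function.update (fun _ => 0) n A with hF
  set σ : ExteriorAlgebra (R ⧸ I) (Ω[(R ⧸ I)⁄ℤ]) →ₗ[R ⧸ I] (OmegaPow R n ⧸ relSub I n) :=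
    ExteriorAlgebra.liftAlternating F with hσ
  -- the key identity
  have key : ∀ x : OmegaPow R n,
      σ ((P.π n x : OmegaPow (R ⧸ I) n).1 : ExteriorAlgebra (R ⧸ I) (Ω[(R ⧸ I)⁄ℤ])) =
        Submodule.Quotient.mk x := by
    intro x
    have hx := mem_closure_genAll x
    induction hx using AddSubgroup.closure_induction with
    | mem z hz =>
      obtain ⟨s, f, rfl⟩ := hz
      rw [P.isOmegaMap n s f]
      have hc : ((OmegaPow.gen (Ideal.Quotient.mk I s)
            (fun i => Ideal.Quotient.mk I (f i)) : OmegaPow (R ⧸ I) n).1 :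
            ExteriorAlgebra (R ⧸ I) (Ω[(R ⧸ I)⁄ℤ])) =
          Ideal.Quotient.mk I s • ExteriorAlgebra.ιMulti (R ⧸ I) n
            (fun i => KaehlerDifferential.D ℤ (R ⧸ I) (Ideal.Quotient.mk I (f i))) := rfl
      rw [hc, map_smul, ExteriorAlgebra.liftAlternating_apply_ιMulti]
      have hFn : F n = A := by rw [hF]; simp
      rw [hFn]
      have hAv : A (fun i => KaehlerDifferential.D ℤ (R ⧸ I) (Ideal.Quotient.mk I (f i))) =
          ψf (fun i => Submodule.Quotient.mk (KaehlerDifferential.D ℤ R (f i))) := by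
        rw [hA]
        show ψ (fun i => φ (KaehlerDifferential.D ℤ (R ⧸ I) (Ideal.Quotient.mk I (f i)))) = _
        rw [ψ_apply]
        congr 1
        funext i
        rw [φ_D, δ_mk]
      rw [hAv, ψf_mk, w'_apply, mkn_smul, ← Submodule.Quotient.mk_smul, ← gen_eq]
    | zero => simp; exact map_zero σ
    | add y z hy hz ihy ihz =>
      have hca : ((P.π n y + P.π n z : OmegaPow (R ⧸ I) n).1 :
          ExteriorAlgebra (R ⧸ I) (Ω[(R ⧸ I)⁄ℤ])) =
          ((P.π n y : OmegaPow (R ⧸ I) n).1 : ExteriorAlgebra (R ⧸ I) (Ω[(R ⧸ I)⁄ℤ])) +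
          ((P.π n z : OmegaPow (R ⧸ I) n).1 : ExteriorAlgebra (R ⧸ I) (Ω[(R ⧸ I)⁄ℤ])) := rfl
      rw [map_add, hca]
      exact (σ.map_add _ _).trans (by rw [ihy, ihz, Submodule.Quotient.mk_add])
    | neg y hy ihy =>
      rw [map_neg]
      have hcn : ((-(P.π n y) : OmegaPow (R ⧸ I) n).1 :
          ExteriorAlgebra (R ⧸ I) (Ω[(R ⧸ I)⁄ℤ])) =
          -(((P.π n y : OmegaPow (R ⧸ I) n)).1 :
            ExteriorAlgebra (R ⧸ I) (Ω[(R ⧸ I)⁄ℤ])) := rfl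
      rw [hcn]
      exact (σ.map_neg _).trans (by rw [ihy]; exact (map_neg (relSub I n).mkQ y).symm)
  have hkey := key ω
  rw [hω] at hkey
  rw [← Submodule.Quotient.mk_eq_zero, ← hkey]
  exact map_zero σ

end MyAux

end Sigma

section LogSide

variable {R : Type*} [CommRing R]

namespace MyAux

theorem nilLog_mem {I : Ideal R} {x : R} (hx : x ∈ I) (N : ℕ) (e : R) :
    nilLog N e x ∈ I := by
  refine I.mul_mem_left e (Submodule.sum_mem I fun k hk => ?_)
  refine I.mul_mem_left _ ?_
  have hk1 : 1 ≤ k := (Finset.mem_Icc.mp hk).1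
  exact Ideal.pow_mem_of_mem I hx k (by omega)

theorem nilLog_step {I : Ideal R} {N : ℕ} (hN : 1 ≤ N) (hnil : I ^ N = ⊥) {e : R}
    (he : e * ((N - 1).factorial : R) = 1) {m : ℕ} (hm : 1 ≤ m) {a : R}
    (ha : a ∈ I ^ m) : a - nilLog N e a ∈ I ^ (m + 1) := by
  rcases Nat.lt_or_ge N 2 with hN1 | hN2
  · -- N = 1, so I = ⊥ and a = 0
    have hNe : N = 1 := by omega
    have hI : I = ⊥ := by rw [hNe, pow_one] at hnil; exact hnil
    have haz : a = 0 := by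
      have haI : a ∈ I := Ideal.pow_le_self (by omega) ha
      rw [hI] at haI; simpa using haI
    have : nilLog N e a = 0 := by
      rw [nilLog, hNe]
      rw [show (1 : ℕ) - 1 = 0 from rfl, Finset.Icc_eq_empty (by omega), Finset.sum_empty,
        mul_zero]
    rw [this, haz, sub_zero]
    exact zero_mem _
  · have h1mem : 1 ∈ Finset.Icc 1 (N - 1) := by
      rw [Finset.mem_Icc]; omega
    have hsplit : ∑ k ∈ Finset.Icc 1 (N - 1),
        (-1 : R) ^ (k + 1) * ((N - 1).factorial / k : ℕ) * a ^ k =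
        ((N - 1).factorial : R) * a + ∑ k ∈ (Finset.Icc 1 (N - 1)).erase 1,
          (-1 : R) ^ (k + 1) * ((N - 1).factorial / k : ℕ) * a ^ k := by
      rw [← Finset.add_sum_erase _ _ h1mem]
      congr 1
      norm_num
    have hlog : nilLog N e a = a + e * ∑ k ∈ (Finset.Icc 1 (N - 1)).erase 1,
        (-1 : R) ^ (k + 1) * ((N - 1).factorial / k : ℕ) * a ^ k := by
      rw [nilLog, hsplit, mul_add, ← mul_assoc, he, one_mul]
    rw [hlog]
    have hsum : (∑ k ∈ (Finset.Icc 1 (N - 1)).erase 1,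
        (-1 : R) ^ (k + 1) * ((N - 1).factorial / k : ℕ) * a ^ k) ∈ I ^ (m + 1) := by
      refine Submodule.sum_mem _ fun k hk => ?_
      have hk2 : 2 ≤ k := by
        rcases Finset.mem_erase.mp hk with ⟨hk1, hk2⟩
        have := (Finset.mem_Icc.mp hk2).1
        omega
      refine Ideal.mul_mem_left _ _ ?_
      have h1 : a ^ k ∈ (I ^ m) ^ k := Ideal.pow_mem_pow ha k
      have h2 : (I ^ m) ^ k = I ^ (m * k) := by rw [← pow_mul]
      have h3 : I ^ (m * k) ≤ I ^ (m + 1) := by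
        refine Ideal.pow_le_pow_right ?_
        calc m + 1 ≤ m * 2 := by omega
        _ ≤ m * k := Nat.mul_le_mul_left m hk2
      exact h3 (h2 ▸ h1)
    have : a - (a + e * ∑ k ∈ (Finset.Icc 1 (N - 1)).erase 1,
        (-1 : R) ^ (k + 1) * ((N - 1).factorial / k : ℕ) * a ^ k) =
        -(e * ∑ k ∈ (Finset.Icc 1 (N - 1)).erase 1,
          (-1 : R) ^ (k + 1) * ((N - 1).factorial / k : ℕ) * a ^ k) := by ring
    rw [this]
    exact neg_mem (Ideal.mul_mem_left _ e hsum)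

theorem map_symbol {R S : Type*} [CommRing R] [CommRing S] (g : R →+* S) {n : ℕ}
    (r : Fin n → Rˣ) :
    MilnorK.map g n (MilnorK.symbol r) =
      MilnorK.symbol (fun k => Units.map (g : R →* S) (r k)) := by
  unfold MilnorK.map MilnorK.symbol
  rw [QuotientAddGroup.map_mk]
  exact congrArg _ (unitsPowMap_tprod g r)

theorem symbol_eq_zero {S : Type*} [CommRing S] {n : ℕ} (r : Fin n → Sˣ) (i : Fin n)
    (hri : r i = 1) : MilnorK.symbol r = 0 := by
  unfold MilnorK.symbol
  have h0 : PiTensorProduct.tprod ℤ (fun k => Additive.ofMul (r k)) = 0 :=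
    MultilinearMap.map_coord_zero _ i (by rw [hri]; rfl)
  rw [h0]
  rfl

theorem symbol_mem_rel (I : Ideal R) {n : ℕ} (i : Fin (n + 1)) (r : Fin n → Rˣ)
    (v : Rˣ) (hv : Ideal.Quotient.mk I ((v : R)) = 1) :
    MilnorK.symbol (i.insertNth v r) ∈ RelMilnorK I (n + 1) := by
  have hmem : MilnorK.map (Ideal.Quotient.mk I) (n + 1)
      (MilnorK.symbol (i.insertNth v r)) = 0 := by
    rw [map_symbol]
    refine symbol_eq_zero _ i ?_
    rw [Fin.insertNth_apply_same]
    exact Units.ext (by simpa using hv)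
  exact hmem

theorem gen_mem_relOmega (I : Ideal R) (P : OmegaMapData (Ideal.Quotient.mk I)) (m : ℕ)
    {s : R} (hs : s ∈ I) (f : Fin m → R) : OmegaPow.gen s f ∈ relOmega P m := by
  simp only [relOmega, AddMonoidHom.mem_ker]
  rw [P.isOmegaMap m s f, Ideal.Quotient.eq_zero_iff_mem.2 hs, gen_zero]

theorem gen_leibniz {m : ℕ} (u b : R) (t : Fin (m + 1) → R) (ht0 : t 0 = b) :
    OmegaPow.gen 1 (Function.update t 0 (u * b)) =
      OmegaPow.gen u t + OmegaPow.gen b (Function.update t 0 u) := by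
  classical
  have hDup : ∀ z : R, (fun j => KaehlerDifferential.D ℤ R (Function.update t 0 z j)) =
      Function.update (fun j => KaehlerDifferential.D ℤ R (t j)) 0
        (KaehlerDifferential.D ℤ R z) := by
    intro z
    funext j
    rcases eq_or_ne j 0 with rfl | hne
    · rw [Function.update_self, Function.update_self]
    · rw [Function.update_of_ne hne, Function.update_of_ne hne]
  rw [gen_eq, gen_eq, gen_eq, one_smul, hDup, hDup]
  rw [Derivation.leibniz]
  rw [(iMultiP R (m + 1)).map_update_add, (iMultiP R (m + 1)).map_update_smul,
    (iMultiP R (m + 1)).map_update_smul]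
  congr 1
  have : Function.update (fun j => KaehlerDifferential.D ℤ R (t j)) 0
      (KaehlerDifferential.D ℤ R b) = fun j => KaehlerDifferential.D ℤ R (t j) := by
    rw [← ht0, Function.update_eq_self]
  rw [this]

end MyAux

end LogSide

section T2

variable {R : Type*} [CommRing R]

namespace MyAux

theorem t2core (I : Ideal R) (D : DeRhamData R) (P : OmegaMapData (Ideal.Quotient.mk I))
    (n : ℕ) (A : AddSubgroup (OmegaPow R n))
    (hexact : ∀ z : OmegaPow R n, z ∈ relExact D P n → z ∈ relOmega P n → z ∈ A)
    (hT1 : ∀ a ∈ I, ∀ f : Fin n → R, OmegaPow.gen a f ∈ A)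
    (u : R) (t : Fin n → R) (i : Fin n) (hti : t i ∈ I) : OmegaPow.gen u t ∈ A := by
  classical
  cases n with
  | zero => exact i.elim0
  | succ m =>
    -- the claim when the `I`-slot is slot `0`
    have main : ∀ t'' : Fin (m + 1) → R, t'' 0 ∈ I → OmegaPow.gen u t'' ∈ A := by
      intro t'' h0
      have hlb := gen_leibniz u (t'' 0) t'' rfl
      have h1 : OmegaPow.gen (t'' 0) (Function.update t'' 0 u) ∈ A := hT1 _ h0 _
      have h2 : OmegaPow.gen 1 (Function.update t'' 0 (u * t'' 0)) ∈ A := by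
        refine hexact _ ?_ ?_
        · show OmegaPow.gen 1 (Function.update t'' 0 (u * t'' 0)) ∈
            (relOmega P m).map (D.d m)
          have hcons : Fin.cons (u * t'' 0) (fun j : Fin m => t'' j.succ) =
              Function.update t'' 0 (u * t'' 0) := by
            funext j
            rcases Fin.eq_zero_or_eq_succ j with rfl | ⟨j', rfl⟩
            · rw [Fin.cons_zero, Function.update_self]
            · rw [Fin.cons_succ, Function.update_of_ne (Fin.succ_ne_zero j')]
          have hd := D.isDeRhamD m (u * t'' 0) (fun j : Fin m => t'' j.succ)
          rw [hcons] at hd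
          exact AddSubgroup.mem_map.2 ⟨OmegaPow.gen (u * t'' 0) (fun j : Fin m => t'' j.succ),
            gen_mem_relOmega I P m (I.mul_mem_left u h0) _, hd⟩
        · simp only [relOmega, AddMonoidHom.mem_ker]
          rw [P.isOmegaMap]
          refine gen_slot_zero _ _ 0 ?_
          show Ideal.Quotient.mk I (Function.update t'' 0 (u * t'' 0) 0) = 0
          rw [Function.update_self]
          exact Ideal.Quotient.eq_zero_iff_mem.2 (I.mul_mem_left u h0)
      have : OmegaPow.gen u t'' =
          OmegaPow.gen 1 (Function.update t'' 0 (u * t'' 0)) -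
            OmegaPow.gen (t'' 0) (Function.update t'' 0 u) :=
        eq_sub_of_add_eq hlb.symm
      rw [this]
      exact sub_mem h2 h1
    -- transfer along the swap permutation
    have hA' : OmegaPow.gen u (fun j => t (Equiv.swap (0 : Fin (m + 1)) i j)) ∈ A :=
      main _ (by rw [Equiv.swap_apply_left]; exact hti)
    have hperm := AlternatingMap.map_perm (iMultiP R (m + 1))
      (fun j => KaehlerDifferential.D ℤ R (t j)) (Equiv.swap (0 : Fin (m + 1)) i)
    have h3 : iMultiP R (m + 1)
        (fun j => KaehlerDifferential.D ℤ R (t (Equiv.swap (0 : Fin (m + 1)) i j))) =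
        ((Equiv.Perm.sign (Equiv.swap (0 : Fin (m + 1)) i) : ℤˣ) : ℤ) •
          iMultiP R (m + 1) (fun j => KaehlerDifferential.D ℤ R (t j)) := by
      rw [← Units.smul_def]
      exact hperm
    rcases Int.units_eq_one_or (Equiv.Perm.sign (Equiv.swap (0 : Fin (m + 1)) i)) with hs | hs
    · have : OmegaPow.gen u t =
          OmegaPow.gen u (fun j => t (Equiv.swap (0 : Fin (m + 1)) i j)) := by
        rw [gen_eq, gen_eq, h3, hs]
        norm_num
      rw [this]
      exact hA'
    · have : OmegaPow.gen u t =
          -OmegaPow.gen u (fun j => t (Equiv.swap (0 : Fin (m + 1)) i j)) := by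
        rw [gen_eq, gen_eq, h3, hs]
        rw [show ((((-1 : ℤˣ) : ℤ)) : ℤ) = -1 from rfl]
        rw [neg_one_zsmul, smul_neg, neg_neg]
      rw [this]
      exact neg_mem hA'
  
end MyAux

end T2

/-- Let `I ⊆ R` be a nilpotent ideal with `I^N = 0` and `(N-1)!`
invertible in `R` (with chosen inverse `e`).  If every element of `R` is a sum of units
and a Bloch map `B : K^M_{n+1}(R,I) → Ω^n_{R,I}/dΩ^{n-1}_{R,I}` exists, then `B` is
surjective. -/
theorem bloch_map_surjective
    {R : Type*} [CommRing R] (I : Ideal R) (N : ℕ) (hN : 1 ≤ N) (hnil : I ^ N = ⊥)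
    (e : R) (he : e * ((N - 1).factorial : R) = 1)
    (hsum : ∀ r : R, r ∈ AddSubgroup.closure {x : R | IsUnit x})
    (D : DeRhamData R) (P : OmegaMapData (Ideal.Quotient.mk I)) (n : ℕ)
    (B : RelMilnorK I (n + 1) →+ relOmegaQuot D P n) (hB : IsBlochMap I N e D P n B) :
    Function.Surjective B := by
  classical
  intro qt
  obtain ⟨⟨ω, hmem⟩, rfl⟩ :=
    QuotientAddGroup.mk'_surjective ((relExact D P n).addSubgroupOf (relOmega P n)) qt
  set AG : AddSubgroup (OmegaPow R n) :=
    AddSubgroup.map (relOmega P n).subtype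
      (AddSubgroup.comap
        (QuotientAddGroup.mk' ((relExact D P n).addSubgroupOf (relOmega P n)))
        B.range) with hAG
  -- exact relative forms are in AG
  have hA_exact : ∀ z : OmegaPow R n, z ∈ relExact D P n → z ∈ relOmega P n → z ∈ AG := by
    intro z hz1 hz2
    refine ⟨⟨z, hz2⟩, ?_, rfl⟩
    have h0 : (QuotientAddGroup.mk' ((relExact D P n).addSubgroupOf (relOmega P n)))
        ⟨z, hz2⟩ = 0 :=
      (QuotientAddGroup.eq_zero_iff _).2 ((AddSubgroup.mem_addSubgroupOf).2 hz1)
    simp only [SetLike.mem_coe, AddSubgroup.mem_comap, h0]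
    exact zero_mem _
  -- Bloch-type generators are in AG
  have hBform : ∀ x ∈ I, ∀ r : Fin n → Rˣ,
      OmegaPow.gen ((-1 : R) ^ (((0 : Fin (n + 1))) : ℕ) * nilLog N e x *
        ∏ k, (((r k)⁻¹ : Rˣ) : R)) (fun k => (r k : R)) ∈ relOmega P n := by
    intro x hx r
    exact MyAux.gen_mem_relOmega I P n
      (I.mul_mem_right _ (I.mul_mem_left _ (MyAux.nilLog_mem hx N e))) _
  have hA_log : ∀ x ∈ I, ∀ r : Fin n → Rˣ,
      OmegaPow.gen (nilLog N e x * ∏ k, (((r k)⁻¹ : Rˣ) : R))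
        (fun k => (r k : R)) ∈ AG := by
    intro x hx r
    have hxn : IsNilpotent x := ⟨N, by
      have h1 := Ideal.pow_mem_pow hx N
      rw [hnil] at h1
      simpa using h1⟩
    have hv := hxn.isUnit_one_add
    have hz := MyAux.symbol_mem_rel I (0 : Fin (n + 1)) r hv.unit
      (by rw [hv.unit_spec, map_add, map_one, Ideal.Quotient.eq_zero_iff_mem.2 hx, add_zero])
    have hωm := hBform x hx r
    have hBeq := hB (0 : Fin (n + 1)) r x hx hv.unit hv.unit_spec hz hωm
    have hrange : QuotientAddGroup.mk' ((relExact D P n).addSubgroupOf (relOmega P n))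
        ⟨_, hωm⟩ ∈ B.range := ⟨⟨_, hz⟩, hBeq⟩
    have hcoef : (-1 : R) ^ (((0 : Fin (n + 1))) : ℕ) * nilLog N e x *
        ∏ k, (((r k)⁻¹ : Rˣ) : R) = nilLog N e x * ∏ k, (((r k)⁻¹ : Rˣ) : R) := by
      norm_num
    rw [← hcoef]
    exact ⟨⟨_, hωm⟩, hrange, rfl⟩
  -- downward induction on the power of I
  have hA_L : ∀ j : ℕ, ∀ m : ℕ, 1 ≤ m → N ≤ m + j → ∀ a ∈ I ^ m, ∀ r : Fin n → Rˣ,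
      OmegaPow.gen (a * ∏ k, (((r k)⁻¹ : Rˣ) : R)) (fun k => (r k : R)) ∈ AG := by
    intro j
    induction j with
    | zero =>
      intro m hm hNm a ha r
      have haz : a = 0 := by
        have h1 : I ^ m ≤ I ^ N := Ideal.pow_le_pow_right (by omega)
        have h2 := h1 ha
        rw [hnil] at h2
        simpa using h2
      rw [haz, zero_mul, MyAux.gen_zero]
      exact zero_mem _
    | succ j ih =>
      intro m hm hNm a ha r
      have haI : a ∈ I := Ideal.pow_le_self (by omega) ha
      have hsplit : OmegaPow.gen (a * ∏ k, (((r k)⁻¹ : Rˣ) : R)) (fun k => (r k : R)) =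
          OmegaPow.gen (nilLog N e a * ∏ k, (((r k)⁻¹ : Rˣ) : R)) (fun k => (r k : R)) +
          OmegaPow.gen ((a - nilLog N e a) * ∏ k, (((r k)⁻¹ : Rˣ) : R))
            (fun k => (r k : R)) := by
        rw [← MyAux.gen_add]
        congr 1
        ring
      rw [hsplit]
      exact add_mem (hA_log a haI r)
        (ih (m + 1) (by omega) (by omega) _ (MyAux.nilLog_step hN hnil he hm ha) r)
  -- coefficients in I with unit slots
  have hA_T1U : ∀ a ∈ I, ∀ r : Fin n → Rˣ,
      OmegaPow.gen a (fun k => (r k : R)) ∈ AG := by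
    intro a ha r
    have hcoef : a = (a * ∏ k, ((r k : Rˣ) : R)) * ∏ k, (((r k)⁻¹ : Rˣ) : R) := by
      rw [mul_assoc, ← Finset.prod_mul_distrib]
      simp
    have hmem' : (a * ∏ k, ((r k : Rˣ) : R)) ∈ I ^ 1 := by
      rw [pow_one]
      exact I.mul_mem_right _ ha
    have := hA_L N 1 le_rfl (by omega) _ hmem' r
    rwa [← hcoef] at this
  -- all type-1 generators
  have hA_T1 : ∀ a ∈ I, ∀ f : Fin n → R, OmegaPow.gen a f ∈ AG := by
    intro a ha f
    have key : ∀ v : Fin n → R, (∀ i, v i ∈ {x : R | IsUnit x}) →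
        (MyAux.genMl R n) v ∈
          AddSubgroup.comap ((LinearMap.lsmul R (OmegaPow R n) a).toAddMonoidHom) AG := by
      intro v hv
      choose u hu using hv
      have hveq : v = fun k => (u k : R) := funext fun i => (hu i).symm
      simp only [AddSubgroup.mem_comap, LinearMap.toAddMonoidHom_coe, LinearMap.lsmul_apply]
      rw [← MyAux.gen_eq_genMl, hveq]
      exact hA_T1U a ha u
    have h1 := MyAux.slot_induction (MyAux.genMl R n) (fun _ => {x : R | IsUnit x}) _
      key f (fun i => hsum (f i))
    simp only [AddSubgroup.mem_comap, LinearMap.toAddMonoidHom_coe,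
      LinearMap.lsmul_apply] at h1
    rw [MyAux.gen_eq_genMl]
    exact h1
  -- all type-2 generators
  have hA_T2 : ∀ (s : R) (f : Fin n → R) (i : Fin n), f i ∈ I →
      OmegaPow.gen s f ∈ AG :=
    fun s f i hfi => MyAux.t2core I D P n AG hA_exact hA_T1 s f i hfi
  -- the relative forms are all in AG
  have hsub : ∀ z ∈ MyAux.relSub I n, z ∈ AG := by
    intro z hz
    have h1 : z ∈ AddSubgroup.closure (MyAux.genSet1 I n ∪ MyAux.genSet2 I n) :=
      MyAux.span_subset_addClosure (MyAux.genSet_union_smul_closed I n) hz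
    clear hz
    induction h1 using AddSubgroup.closure_induction with
    | mem y hy =>
      rcases hy with ⟨s, f, hs, rfl⟩ | ⟨s, f, i, hfi, rfl⟩
      · exact hA_T1 s hs f
      · exact hA_T2 s f i hfi
    | zero => exact zero_mem _
    | add y z hy hz ihy ihz => exact add_mem ihy ihz
    | neg y hy ihy => exact neg_mem ihy
  -- conclude
  have hker : P.π n ω = 0 := hmem
  have hωA : ω ∈ AG := hsub ω (MyAux.ker_pi_le_relSub I P n ω hker)
  rcases hωA with ⟨y', hy', hyz⟩
  have hyy : y' = ⟨ω, hmem⟩ := Subtype.ext hyz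
  rw [hyy] at hy'
  rcases hy' with ⟨z, hzeq⟩
  exact ⟨z, hzeq⟩
end
end

section
/- Let S be a commutative ring in which 2 is invertible and which is weakly 5-fold stable. Let S' = S[[x]], and for q ≥ 1 let θ_q : S'[[t]] → S[[t]] be the S[[t]]-algebra homomorphism sending x to t^q, and θ_0 : S'[[t]] → S[[t]] the one sending x to 0. Then for all natural numbers p, q ≥ 0, the group homomorphism θ_q − θ_0 : K^M_2(S'[[t]]) → K^M_2(S[[t]]) (the difference of the induced maps) maps the subgroup V'_p into V_{p+q}. -/
open scoped TensorProduct

noncomputable section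

/-! ### Filtrations on `K^M_2(S[[t]])` -/

/-- `f ∈ U_i = 1 + t^i·S[[t]]` (for `i = 0` this condition holds for every unit). -/
def inU {S : Type*} [CommRing S] (i : ℕ) (f : (PowerSeries S)ˣ) : Prop :=
  ∃ y : PowerSeries S, (f : PowerSeries S) = 1 + PowerSeries.X ^ i * y

/-- The subgroup `V_p ⊆ K^M_2(S[[t]])` generated by the symbols `{f, g}` with `f ∈ U_i`,
`g ∈ U_j` and `i + j ≥ p`. -/
def Vsub (S : Type*) [CommRing S] (p : ℕ) : AddSubgroup (MilnorK (PowerSeries S) 2) :=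
  AddSubgroup.closure {z | ∃ (i j : ℕ) (f g : (PowerSeries S)ˣ),
    p ≤ i + j ∧ inU i f ∧ inU j g ∧ z = MilnorK.symbol ![f, g]}

/-- The subgroup `W_p = K^M_2(S[[t]], (t^p))`, with the convention `W_0 = K^M_2(S[[t]])`. -/
def Wsub (S : Type*) [CommRing S] (p : ℕ) : AddSubgroup (MilnorK (PowerSeries S) 2) :=
  if p = 0 then ⊤
  else RelMilnorK (Ideal.span {(PowerSeries.X : PowerSeries S) ^ p}) 2

theorem symbol_mul_fst' {R : Type*} [CommRing R] (a b g : Rˣ) :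
    MilnorK.symbol ![a * b, g] = MilnorK.symbol ![a, g] + MilnorK.symbol ![b, g] := by
  unfold MilnorK.symbol
  rw [← QuotientAddGroup.mk_add]
  congr 1
  have h := MultilinearMap.map_update_add (PiTensorProduct.tprod ℤ
      (s := fun _ : Fin 2 => Additive Rˣ)) ![Additive.ofMul a, Additive.ofMul g] 0
      (Additive.ofMul a) (Additive.ofMul b)
  have e1 : Function.update ![Additive.ofMul a, Additive.ofMul g] 0
      (Additive.ofMul a + Additive.ofMul b) = fun k => Additive.ofMul (![a * b, g] k) := by
    funext k; fin_cases k <;> simp [Function.update]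
  have e2 : Function.update ![Additive.ofMul a, Additive.ofMul g] 0 (Additive.ofMul a)
      = fun k => Additive.ofMul (![a, g] k) := by
    funext k; fin_cases k <;> simp [Function.update]
  have e3 : Function.update ![Additive.ofMul a, Additive.ofMul g] 0 (Additive.ofMul b)
      = fun k => Additive.ofMul (![b, g] k) := by
    funext k; fin_cases k <;> simp [Function.update]
  rw [e1, e2, e3] at h
  exact h

theorem symbol_mul_snd' {R : Type*} [CommRing R] (f a b : Rˣ) :
    MilnorK.symbol ![f, a * b] = MilnorK.symbol ![f, a] + MilnorK.symbol ![f, b] := by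
  unfold MilnorK.symbol
  rw [← QuotientAddGroup.mk_add]
  congr 1
  have h := MultilinearMap.map_update_add (PiTensorProduct.tprod ℤ
      (s := fun _ : Fin 2 => Additive Rˣ)) ![Additive.ofMul f, Additive.ofMul a] 1
      (Additive.ofMul a) (Additive.ofMul b)
  have e1 : Function.update ![Additive.ofMul f, Additive.ofMul a] 1
      (Additive.ofMul a + Additive.ofMul b) = fun k => Additive.ofMul (![f, a * b] k) := by
    funext k; fin_cases k <;> simp [Function.update]
  have e2 : Function.update ![Additive.ofMul f, Additive.ofMul a] 1 (Additive.ofMul a)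
      = fun k => Additive.ofMul (![f, a] k) := by
    funext k; fin_cases k <;> simp [Function.update]
  have e3 : Function.update ![Additive.ofMul f, Additive.ofMul a] 1 (Additive.ofMul b)
      = fun k => Additive.ofMul (![f, b] k) := by
    funext k; fin_cases k <;> simp [Function.update]
  rw [e1, e2, e3] at h
  exact h

theorem MilnorK.map_symbol {R S : Type*} [CommRing R] [CommRing S] (g : R →+* S) {n : ℕ}
    (r : Fin n → Rˣ) :
    MilnorK.map g n (MilnorK.symbol r) =
      MilnorK.symbol (fun k => Units.map (g : R →* S) (r k)) := by
  unfold MilnorK.map MilnorK.symbol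
  rw [QuotientAddGroup.map_mk]
  exact congrArg _ (unitsPowMap_tprod g r)

/-- Split an element of `S[[x]][[t]]` as its `x`-constant part plus `x` times a rest. -/
theorem ps_decomp {S : Type*} [CommRing S] (h : PowerSeries (PowerSeries S)) :
    h = PowerSeries.map (PowerSeries.C : S →+* PowerSeries S)
          (PowerSeries.map (PowerSeries.constantCoeff : PowerSeries S →+* S) h) +
        (PowerSeries.C : PowerSeries S →+* PowerSeries (PowerSeries S)) PowerSeries.X *
          PowerSeries.mk (fun n => PowerSeries.mk fun m =>
            PowerSeries.coeff (m + 1) (PowerSeries.coeff n h)) := by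
  refine PowerSeries.ext fun n => ?_
  rw [map_add, PowerSeries.coeff_map, PowerSeries.coeff_map, PowerSeries.coeff_C_mul,
    PowerSeries.coeff_mk, add_comm]
  exact PowerSeries.eq_X_mul_shift_add_const _

/-- Let `2` be invertible in `S` and let `S` be weakly `5`-fold stable.
Let `S' = S[[x]]`, let `θ_q : S'[[t]] → S[[t]]` be the `S[[t]]`-algebra homomorphism
sending `x` to `t^q` (`q ≥ 1`) and `θ_0` the one sending `x` to `0`.  Then for all
`p, q ≥ 0` the difference `θ_q - θ_0 : K^M_2(S'[[t]]) → K^M_2(S[[t]])` maps `V'_p` into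
`V_{p+q}`. -/
theorem theta_difference_maps_V
    {S : Type*} [CommRing S] (h2 : IsUnit (2 : S)) (hstable : WeaklyFiveFoldStable S)
    (p q : ℕ)
    (θq θ0 : PowerSeries (PowerSeries S) →+* PowerSeries S)
    (hθqalg : ∀ f : PowerSeries S, θq (PowerSeries.map (PowerSeries.C : S →+* PowerSeries S) f) = f)
    (hθ0alg : ∀ f : PowerSeries S, θ0 (PowerSeries.map (PowerSeries.C : S →+* PowerSeries S) f) = f)
    (hθqX : 1 ≤ q →
      θq ((PowerSeries.C : PowerSeries S →+* PowerSeries (PowerSeries S)) PowerSeries.X) = PowerSeries.X ^ q)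
    (hθq0 : q = 0 → θq = θ0)
    (hθ0X : θ0 ((PowerSeries.C : PowerSeries S →+* PowerSeries (PowerSeries S)) PowerSeries.X) = 0) :
    ∀ z ∈ Vsub (PowerSeries S) p,
      MilnorK.map θq 2 z - MilnorK.map θ0 2 z ∈ Vsub S (p + q) := by
  intro z hz
  rcases Nat.eq_zero_or_pos q with hq0 | hq1
  · rw [hθq0 hq0, sub_self]
    exact zero_mem _
  -- the difference map as an `AddMonoidHom`
  set D : MilnorK (PowerSeries (PowerSeries S)) 2 →+ MilnorK (PowerSeries S) 2 :=
    MilnorK.map θq 2 - MilnorK.map θ0 2 with hD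
  -- `θ` fixes `t`
  have hX : θq (PowerSeries.X : PowerSeries (PowerSeries S)) = PowerSeries.X := by
    have h := hθqalg PowerSeries.X; rwa [PowerSeries.map_X] at h
  have hX0 : θ0 (PowerSeries.X : PowerSeries (PowerSeries S)) = PowerSeries.X := by
    have h := hθ0alg PowerSeries.X; rwa [PowerSeries.map_X] at h
  -- key divisibility: `t^q ∣ θq h - θ0 h` for all `h`
  have hdvd : ∀ h : PowerSeries (PowerSeries S),
      ∃ w, θq h - θ0 h = PowerSeries.X ^ q * w := by
    intro h
    refine ⟨θq (PowerSeries.mk fun n => PowerSeries.mk fun m =>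
      PowerSeries.coeff (m + 1) (PowerSeries.coeff n h)), ?_⟩
    conv_lhs => rw [ps_decomp h]
    rw [map_add, map_add, map_mul, map_mul, hθqalg, hθ0alg, hθqX hq1, hθ0X, zero_mul,
      add_zero]
    ring
  have hle : Vsub (PowerSeries S) p ≤
      AddSubgroup.comap D (Vsub S (p + q)) := by
    refine (AddSubgroup.closure_le _).mpr ?_
    rintro w ⟨i, j, f, g, hij, ⟨yf, hf⟩, ⟨yg, hg⟩, rfl⟩
    simp only [SetLike.mem_coe, AddSubgroup.mem_comap]
    rw [hD, AddMonoidHom.sub_apply, MilnorK.map_symbol, MilnorK.map_symbol]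
    set F : (PowerSeries S)ˣ :=
      Units.map (θq : PowerSeries (PowerSeries S) →* PowerSeries S) f with hF
    set G : (PowerSeries S)ˣ :=
      Units.map (θq : PowerSeries (PowerSeries S) →* PowerSeries S) g with hG
    set F0 : (PowerSeries S)ˣ :=
      Units.map (θ0 : PowerSeries (PowerSeries S) →* PowerSeries S) f with hF0
    set G0 : (PowerSeries S)ˣ :=
      Units.map (θ0 : PowerSeries (PowerSeries S) →* PowerSeries S) g with hG0
    have hfun_q : (fun k => Units.map (θq : PowerSeries (PowerSeries S) →* PowerSeries S)
        (![f, g] k)) = ![F, G] := by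
      funext k; fin_cases k <;> rfl
    have hfun_0 : (fun k => Units.map (θ0 : PowerSeries (PowerSeries S) →* PowerSeries S)
        (![f, g] k)) = ![F0, G0] := by
      funext k; fin_cases k <;> rfl
    rw [hfun_q, hfun_0]
    -- the correction units
    obtain ⟨wf, hwf⟩ := hdvd yf
    obtain ⟨wg, hwg⟩ := hdvd yg
    have hFval : (F : PowerSeries S) = θq (f : PowerSeries (PowerSeries S)) := rfl
    have hGval : (G : PowerSeries S) = θq (g : PowerSeries (PowerSeries S)) := rfl
    have hF0val : (F0 : PowerSeries S) = θ0 (f : PowerSeries (PowerSeries S)) := rfl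
    have hG0val : (G0 : PowerSeries S) = θ0 (g : PowerSeries (PowerSeries S)) := rfl
    have hFeq : (F : PowerSeries S) = (F0 : PowerSeries S) + PowerSeries.X ^ (i + q) * wf := by
      rw [hFval, hF0val, hf, map_add, map_add, map_one, map_mul, map_mul, map_pow, map_pow,
        hX, hX0]
      have : θq yf = θ0 yf + PowerSeries.X ^ q * wf := by
        rw [← hwf]; ring
      rw [this, pow_add]; simp only [map_one]; ring
    have hGeq : (G : PowerSeries S) = (G0 : PowerSeries S) + PowerSeries.X ^ (j + q) * wg := by
      rw [hGval, hG0val, hg, map_add, map_add, map_one, map_mul, map_mul, map_pow, map_pow,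
        hX, hX0]
      have : θq yg = θ0 yg + PowerSeries.X ^ q * wg := by
        rw [← hwg]; ring
      rw [this, pow_add]; simp only [map_one]; ring
    have hA : inU (i + q) (F * F0⁻¹) := by
      refine ⟨wf * ((F0⁻¹ : (PowerSeries S)ˣ) : PowerSeries S), ?_⟩
      rw [Units.val_mul, hFeq, add_mul, Units.mul_inv]
      ring
    have hB : inU (j + q) (G * G0⁻¹) := by
      refine ⟨wg * ((G0⁻¹ : (PowerSeries S)ˣ) : PowerSeries S), ?_⟩
      rw [Units.val_mul, hGeq, add_mul, Units.mul_inv]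
      ring
    have hGU : inU j G := by
      refine ⟨θq yg, ?_⟩
      rw [hGval, hg, map_add, map_one, map_mul, map_pow, hX]
    have hF0U : inU i F0 := by
      refine ⟨θ0 yf, ?_⟩
      rw [hF0val, hf, map_add, map_one, map_mul, map_pow, hX0]
    -- bilinearity computation
    have hsplit : MilnorK.symbol ![F, G] - MilnorK.symbol ![F0, G0] =
        MilnorK.symbol ![F * F0⁻¹, G] + MilnorK.symbol ![F0, G * G0⁻¹] := by
      have h1 : MilnorK.symbol ![F, G] =
          MilnorK.symbol ![F * F0⁻¹, G] + MilnorK.symbol ![F0, G] := by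
        conv_lhs => rw [show F = F * F0⁻¹ * F0 from (inv_mul_cancel_right F F0).symm]
        exact symbol_mul_fst' _ _ _
      have h2 : MilnorK.symbol ![F0, G] =
          MilnorK.symbol ![F0, G * G0⁻¹] + MilnorK.symbol ![F0, G0] := by
        conv_lhs => rw [show G = G * G0⁻¹ * G0 from (inv_mul_cancel_right G G0).symm]
        exact symbol_mul_snd' _ _ _
      rw [h1, h2]
      abel
    rw [hsplit]
    refine add_mem (AddSubgroup.subset_closure ?_) (AddSubgroup.subset_closure ?_)
    · exact ⟨i + q, j, F * F0⁻¹, G, by omega, hA, hGU, rfl⟩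
    · exact ⟨i, j + q, F0, G * G0⁻¹, by omega, hF0U, hB, rfl⟩
  have hmem := hle hz
  simpa only [AddSubgroup.mem_comap, hD, AddMonoidHom.sub_apply] using hmem
end
end

section
/- Let R be a weakly 5-fold stable commutative ring. Then for all units r, s ∈ R^*, the equality {r, s} = −{s, r} holds in the Milnor K-group K^M_2(R). -/
open scoped TensorProduct

noncomputable section

namespace MilnorAux

variable {R : Type*} [CommRing R]

def sym2 (a b : Rˣ) : MilnorK R 2 := MilnorK.symbol ![a, b]

lemma upd0 {M : Type*} (x y z : M) : Function.update ![z, y] 0 x = ![x, y] := by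
  funext k; fin_cases k <;> rfl

lemma upd1 {M : Type*} (x y z : M) : Function.update ![x, z] 1 y = ![x, y] := by
  funext k; fin_cases k <;> rfl

lemma tprod_pair (a b : Rˣ) :
    (PiTensorProduct.tprod ℤ fun k => Additive.ofMul (![a, b] k)) =
      PiTensorProduct.tprod ℤ ![Additive.ofMul a, Additive.ofMul b] := by
  congr 1

lemma sym2_def (a b : Rˣ) :
    sym2 a b = QuotientAddGroup.mk
      (PiTensorProduct.tprod ℤ ![Additive.ofMul a, Additive.ofMul b]) := by
  rw [sym2, MilnorK.symbol, tprod_pair]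

lemma sym2_mul_left (a b c : Rˣ) : sym2 (a * b) c = sym2 a c + sym2 b c := by
  have h := MultilinearMap.map_update_add (PiTensorProduct.tprod ℤ)
    ![Additive.ofMul a, Additive.ofMul c] 0 (Additive.ofMul a) (Additive.ofMul b)
  rw [upd0, upd0, upd0, ← ofMul_mul] at h
  simp only [sym2_def]
  rw [h, QuotientAddGroup.mk_add]

lemma sym2_mul_right (a b c : Rˣ) : sym2 a (b * c) = sym2 a b + sym2 a c := by
  have h := MultilinearMap.map_update_add (PiTensorProduct.tprod ℤ)
    ![Additive.ofMul a, Additive.ofMul b] 1 (Additive.ofMul b) (Additive.ofMul c)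
  rw [upd1, upd1, upd1, ← ofMul_mul] at h
  simp only [sym2_def]
  rw [h, QuotientAddGroup.mk_add]

lemma sym2_one_left (b : Rˣ) : sym2 (R := R) 1 b = 0 := by
  have h := sym2_mul_left (R := R) 1 1 b
  rw [one_mul] at h
  exact (left_eq_add.mp h)

lemma sym2_one_right (a : Rˣ) : sym2 (R := R) a 1 = 0 := by
  have h := sym2_mul_right (R := R) a 1 1
  rw [one_mul] at h
  exact (left_eq_add.mp h)

lemma sym2_inv_left (a b : Rˣ) : sym2 a⁻¹ b = -sym2 a b := by
  have h := sym2_mul_left a⁻¹ a b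
  rw [inv_mul_cancel, sym2_one_left] at h
  exact eq_neg_of_add_eq_zero_left h.symm

lemma sym2_inv_right (a b : Rˣ) : sym2 a b⁻¹ = -sym2 a b := by
  have h := sym2_mul_right a b⁻¹ b
  rw [inv_mul_cancel, sym2_one_right] at h
  exact eq_neg_of_add_eq_zero_left h.symm

lemma sym2_steinberg (a b : Rˣ) (h : (a : R) + (b : R) = 1) : sym2 a b = 0 := by
  rw [sym2, MilnorK.symbol, QuotientAddGroup.eq_zero_iff]
  refine AddSubgroup.subset_closure ⟨![a, b], 0, 1, rfl, ?_, rfl⟩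
  simpa using h

/-- `{a, -a} = 0` when `1 - a` is a unit. -/
lemma sym2_neg_self (a : Rˣ) (h : IsUnit ((1 : R) - a)) : sym2 a (-a) = 0 := by
  set u : Rˣ := h.unit with hu_def
  have hu : (u : R) = 1 - a := h.unit_spec
  set v : Rˣ := -(a⁻¹ * u) with hv_def
  have h1 : (↑a⁻¹ : R) * ↑a = 1 := a.inv_mul
  have hv : (v : R) = 1 - ↑a⁻¹ := by
    rw [hv_def, Units.val_neg, Units.val_mul, hu]
    linear_combination h1
  have hna : (-a : Rˣ) = u * v⁻¹ := by
    rw [eq_mul_inv_iff_mul_eq]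
    ext
    rw [Units.val_mul, Units.val_neg, hv, hu]
    linear_combination a.mul_inv
  have hau : sym2 a u = 0 := sym2_steinberg a u (by rw [hu]; ring)
  have hav : sym2 a v = 0 := by
    have h0 : sym2 a⁻¹ v = 0 := sym2_steinberg a⁻¹ v (by rw [hv]; ring)
    have := sym2_inv_left a⁻¹ v
    rw [inv_inv, h0] at this
    simpa using this
  rw [hna, sym2_mul_right, hau, sym2_inv_right, hav]
  simp

lemma sym2_neg_mul (a b : Rˣ) :
    sym2 (a * b) (-(a * b)) =
      sym2 a (-a) + sym2 b (-b) + (sym2 a b + sym2 b a) := by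
  have h1 : (-(a * b) : Rˣ) = (-a) * b := by rw [neg_mul]
  have h2 : (-(a * b) : Rˣ) = a * (-b) := by rw [mul_neg]
  rw [sym2_mul_left]
  nth_rewrite 1 [h1]
  rw [h2]
  rw [sym2_mul_right, sym2_mul_right]
  abel

lemma S_eq_zero (a b : Rˣ) (ha : IsUnit ((1 : R) - a)) (hb : IsUnit ((1 : R) - b))
    (hab : IsUnit ((1 : R) - (a * b : Rˣ))) : sym2 a b + sym2 b a = 0 := by
  have h := sym2_neg_mul a b
  rw [sym2_neg_self a ha, sym2_neg_self b hb, sym2_neg_self (a * b) hab] at h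
  simpa using h.symm

/-- helper: turn a stability condition into goodness of a product. -/
lemma good_of (c x : Rˣ) (h : IsUnit (-(↑c⁻¹ : R) + x)) :
    IsUnit ((1 : R) - (c * x : Rˣ)) := by
  have h2 := ((-c : Rˣ).isUnit).mul h
  have h3 : ((-c : Rˣ) : R) * (-(↑c⁻¹ : R) + x) = 1 - (c * x : Rˣ) := by
    rw [Units.val_neg, Units.val_mul]
    linear_combination c.mul_inv
  rwa [h3] at h2

lemma good_of_one (x : Rˣ) (h : IsUnit ((-1 : R) + x)) :
    IsUnit ((1 : R) - x) := by
  have := h.neg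
  rwa [neg_add, neg_neg, ← sub_eq_add_neg] at this

end MilnorAux

/-- In a weakly `5`-fold stable commutative ring `R`, the equality
`{r, s} = -{s, r}` holds in `K^M_2(R)` for all units `r, s`. -/
theorem milnorK_symbol_anticomm
    {R : Type*} [CommRing R] (hstable : WeaklyFiveFoldStable R) (r s : Rˣ) :
    MilnorK.symbol ![r, s] = -MilnorK.symbol ![s, r] := by
  open MilnorAux in
  show sym2 r s = -sym2 s r
  -- choose `u` with `u` and `r*u` good
  obtain ⟨u, hu1, hu2, -, -⟩ := hstable (-1) (-(↑r⁻¹ : R)) (-1) (-1)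
  have gu : IsUnit ((1 : R) - u) := good_of_one u (by rwa [show ((-1 : R)) = (-1 : R) from rfl] at hu1)
  have gru : IsUnit ((1 : R) - (r * u : Rˣ)) := good_of r u hu2
  -- choose `v` with `v`, `s*v`, `(r*u)*v`, `(r*u*s)*v` good
  obtain ⟨v, hv1, hv2, hv3, hv4⟩ :=
    hstable (-1) (-(↑s⁻¹ : R)) (-(↑(r * u)⁻¹ : R)) (-(↑(r * u * s)⁻¹ : R))
  have gv : IsUnit ((1 : R) - v) := good_of_one v hv1
  have gsv : IsUnit ((1 : R) - (s * v : Rˣ)) := good_of s v hv2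
  have gruv : IsUnit ((1 : R) - ((r * u) * v : Rˣ)) := good_of (r * u) v hv3
  have grusv : IsUnit ((1 : R) - ((r * u) * (s * v) : Rˣ)) := by
    have := good_of (r * u * s) v hv4
    rwa [(mul_assoc (r * u) s v).symm]
  -- choose `w` with `w`, `s*w`, `u*w`, `(u*s)*w` good
  obtain ⟨w, hw1, hw2, hw3, hw4⟩ :=
    hstable (-1) (-(↑s⁻¹ : R)) (-(↑u⁻¹ : R)) (-(↑(u * s)⁻¹ : R))
  have gw : IsUnit ((1 : R) - w) := good_of_one w hw1
  have gsw : IsUnit ((1 : R) - (s * w : Rˣ)) := good_of s w hw2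
  have guw : IsUnit ((1 : R) - (u * w : Rˣ)) := good_of u w hw3
  have gusw : IsUnit ((1 : R) - (u * (s * w) : Rˣ)) := by
    have := good_of (u * s) w hw4
    rwa [(mul_assoc u s w).symm]
  have h1 := S_eq_zero (r * u) (s * v) gru gsv grusv
  have h2 := S_eq_zero (r * u) v gru gv gruv
  have h3 := S_eq_zero u (s * w) gu gsw gusw
  have h4 := S_eq_zero u w gu gw guw
  have key : sym2 r s + sym2 s r = 0 := by
    have e : sym2 r s + sym2 s r =
        (sym2 (r * u) (s * v) + sym2 (s * v) (r * u))
          - (sym2 (r * u) v + sym2 v (r * u))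
          - (sym2 u (s * w) + sym2 (s * w) u)
          + (sym2 u w + sym2 w u) := by
      simp only [sym2_mul_left, sym2_mul_right]
      abel
    rw [e, h1, h2, h3, h4]
    simp
  exact eq_neg_of_add_eq_zero_left key
end
end
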